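/- arXiv:1411.6109 — 5 statements merged into one kernel-verified Lean document; each statement's English description precedes it below -/
import Mathlib

section
/- Let m ≥ 2, let λ_i > 0 and γ_i ∈ {−1, +1} for i ∈ {1,…,m}, and let K = (K_{ij}) be a symmetric m × m real matrix with nonnegative entries such that, for some index k, K_{kj} > 0 for every j ≠ k. Then there exist real coefficients θ_i^j (i ≠ k, j ∈ {1,…,m}), depending only on λ, γ and K, such that: whenever real numbers (u_i) and (v_i) satisfy the transmission relations γ_i λ_i v_i = Σ_{j=1}^m K_{ij}(u_j − u_i) for every i ∈ {1,…,m}, one has u_j = u_k + Σ_{i≠k} θ_i^j v_i for every j ∈ {1,…,m}. -/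
open Finset Matrix

/-!
Writing `w j = u j - u k`, the transmission relations at the nodes `i ≠ k` form a square
linear system `A w = b` with right-hand side `b i = γ i * lam i * v i`. Its matrix `A` is minus
the weighted graph Laplacian of `K` with the row and column of `k` removed; since every `i ≠ k`
is linked to `k` with positive weight, `A` is strictly diagonally dominant, so it is invertible
by Gershgorin's theorem and `w = A⁻¹ b`.
-/

variable {ι : Type*} [Fintype ι] [DecidableEq ι]

def reducedLaplacian (K : ι → ι → ℝ) (k : ι) : Matrix {i // i ≠ k} {i // i ≠ k} ℝ :=
  Matrix.of fun i j => K i j - if i = j then ∑ l, K i l else 0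

theorem reducedLaplacian_mulVec_sub (K : ι → ι → ℝ) (k : ι) (u : ι → ℝ) (i : {i // i ≠ k}) :
    (reducedLaplacian K k *ᵥ fun j => u j - u k) i = ∑ j, K i j * (u j - u i) := by
  have hsplit : ∑ j, K i j * (u j - u k) = ∑ j : {j // j ≠ k}, K i j * (u j - u k) := by
    rw [Fintype.sum_eq_add_sum_subtype_ne _ k, sub_self, mul_zero, zero_add]
  calc (reducedLaplacian K k *ᵥ fun j => u j - u k) i
      = ∑ j : {j // j ≠ k}, K i j * (u j - u k) - (∑ l, K i l) * (u i - u k) := by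
        simp only [reducedLaplacian, mulVec, dotProduct, of_apply, sub_mul, sum_sub_distrib,
          ite_mul, zero_mul, sum_ite_eq, mem_univ, if_true]
    _ = ∑ j, (K i j * (u j - u k) - K i j * (u i - u k)) := by
        rw [sum_sub_distrib, ← sum_mul, hsplit]
    _ = ∑ j, K i j * (u j - u i) := sum_congr rfl fun j _ => by ring

theorem det_reducedLaplacian_ne_zero {K : ι → ι → ℝ} {k : ι} (hK : ∀ i j, 0 ≤ K i j)
    (hk : ∀ i, i ≠ k → 0 < K i k) : (reducedLaplacian K k).det ≠ 0 := by
  refine det_ne_zero_of_sum_row_lt_diag fun i => ?_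
  have hrow : ∑ l, K i l = K i k + K i i + ∑ j ∈ univ.erase i, K i j := by
    rw [Fintype.sum_eq_add_sum_subtype_ne _ k, ← add_sum_erase _ _ (mem_univ i), add_assoc]
  have hdiag : ‖reducedLaplacian K k i i‖ = ∑ l, K i l - K i i := by
    rw [Real.norm_eq_abs, abs_of_nonpos] <;>
      simp only [reducedLaplacian, of_apply, if_true] <;>
      linarith [hk i i.2, sum_nonneg fun j (_ : j ∈ univ.erase i) => hK i j]
  have hoff : ∀ j ∈ univ.erase i, ‖reducedLaplacian K k i j‖ = K i j := fun j hj => by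
    simp [reducedLaplacian, (ne_of_mem_erase hj).symm, abs_of_nonneg (hK i j)]
  rw [sum_congr rfl hoff, hdiag]
  linarith [hk i i.2]

theorem sub_eq_sum_inv_reducedLaplacian {K : ι → ι → ℝ} {k : ι}
    (hdet : (reducedLaplacian K k).det ≠ 0) {u b : ι → ℝ}
    (hrel : ∀ i, b i = ∑ j, K i j * (u j - u i)) (j : {j // j ≠ k}) :
    u j - u k = ∑ i, (reducedLaplacian K k)⁻¹ j i * b i := by
  have hsys : reducedLaplacian K k *ᵥ (fun j => u j - u k) = fun i : {i // i ≠ k} => b i :=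
    funext fun i => (reducedLaplacian_mulVec_sub K k u i).trans (hrel i).symm
  have hsol : (fun j : {j // j ≠ k} => u j - u k) =
      (reducedLaplacian K k)⁻¹ *ᵥ fun i : {i // i ≠ k} => b i := by
    rw [← hsys, mulVec_mulVec, nonsing_inv_mul _ (isUnit_iff_ne_zero.mpr hdet), one_mulVec]
  exact congrFun hsol j

theorem traces_as_linear_combination_of_fluxes_general
    {m : ℕ}
    (lam : Fin m → ℝ)
    (γ : Fin m → ℝ)
    (K : Fin m → Fin m → ℝ)
    (hKsym : ∀ i j, K i j = K j i) (hKnn : ∀ i j, 0 ≤ K i j)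
    (k : Fin m) (hk : ∀ j, j ≠ k → 0 < K k j) :
    ∃ θ : {i : Fin m // i ≠ k} → Fin m → ℝ,
      ∀ u v : Fin m → ℝ,
        (∀ i, γ i * lam i * v i = ∑ j, K i j * (u j - u i)) →
        ∀ j, u j = u k + ∑ i : {i : Fin m // i ≠ k}, θ i j * v i := by
  have hdet : (reducedLaplacian K k).det ≠ 0 :=
    det_reducedLaplacian_ne_zero hKnn fun i hi => hKsym k i ▸ hk i hi
  refine ⟨fun i j =>
    if hj : j = k then 0 else (reducedLaplacian K k)⁻¹ ⟨j, hj⟩ i * (γ i * lam i),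
    fun u v hrel j => ?_⟩
  by_cases hj : j = k
  · simp [hj]
  · rw [← sub_eq_iff_eq_add', sub_eq_sum_inv_reducedLaplacian hdet hrel ⟨j, hj⟩]
    exact sum_congr rfl fun i _ => by simp only [dif_neg hj, mul_assoc]

/-- **Traces of the density in terms of the fluxes at a node.**
Let `m ≥ 2`, `λ_i > 0`, `γ_i ∈ {-1, +1}`, and let `K` be a symmetric `m × m` matrix
with nonnegative entries such that for some index `k` one has `K k j > 0` for all
`j ≠ k`.  Then there are coefficients `θ i j` (for `i ≠ k`, `j ∈ {1,…,m}`), depending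
only on `λ`, `γ` and `K`, such that whenever `(u_i)` and `(v_i)` satisfy the
transmission relations `γ_i λ_i v_i = ∑_j K_{ij} (u_j - u_i)` for every `i`, one has
`u_j = u_k + ∑_{i ≠ k} θ i j * v_i` for every `j`. -/
theorem traces_as_linear_combination_of_fluxes
    {m : ℕ} (hm : 2 ≤ m)
    (lam : Fin m → ℝ) (hlam : ∀ i, 0 < lam i)
    (γ : Fin m → ℝ) (hγ : ∀ i, γ i = 1 ∨ γ i = -1)
    (K : Fin m → Fin m → ℝ)
    (hKsym : ∀ i j, K i j = K j i) (hKnn : ∀ i j, 0 ≤ K i j)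
    (k : Fin m) (hk : ∀ j, j ≠ k → 0 < K k j) :
    ∃ θ : {i : Fin m // i ≠ k} → Fin m → ℝ,
      ∀ u v : Fin m → ℝ,
        (∀ i, γ i * lam i * v i = ∑ j, K i j * (u j - u i)) →
        ∀ j, u j = u k + ∑ i : {i : Fin m // i ≠ k}, θ i j * v i :=
  traces_as_linear_combination_of_fluxes_general lam γ K hKsym hKnn k hk
end

section
/- Consider a star network with a single node N and m arcs, arc I_i a compact interval joining the outer vertex a_i to N (incoming if I_i = [a_i, N], outgoing if I_i = [N, a_i]). Let D_i > 0, b > 0, let α = (α_{ij}) be a symmetric m × m matrix with nonnegative entries, and let φ_i ∈ C²(I_i) satisfy the Neumann condition φ_i'(a_i) = 0 at every outer vertex and the Kedem–Katchalsky conditions at the node: D_i φ_i'(N) = Σ_{j=1}^m α_{ij}(φ_j(N) − φ_i(N)) for incoming i and −D_i φ_i'(N) = Σ_{j=1}^m α_{ij}(φ_j(N) − φ_i(N)) for outgoing i. Then Σ_{i=1}^m ∫_{I_i} (D_i φ_i''(x) − b φ_i(x)) φ_i(x) dx = −(1/2) Σ_{i,j=1}^m α_{ij}(φ_j(N) − φ_i(N))²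 − Σ_{i=1}^m ∫_{I_i} (D_i φ_i'(x)² + b φ_i(x)²) dx; in particular the left-hand side is nonpositive. -/
/-!
Integrating `(D φ'' - b φ) φ` by parts on each arc leaves the energy `-∫ (D φ'² + b φ²)` and the
boundary term `D φ' φ` at both ends. The Neumann condition kills it at the outer vertex, and the
Kedem–Katchalsky condition turns it at the node into `(∑ⱼ αᵢⱼ (φⱼ(N) - φᵢ(N))) φᵢ(N)`. Summed over
the arcs, the symmetry of `α` turns these node terms into `-(1/2) ∑ᵢⱼ αᵢⱼ (φⱼ(N) - φᵢ(N))²`.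
-/

open Finset intervalIntegral

theorem integral_deriv_deriv_mul_self {f : ℝ → ℝ} (hf : ContDiff ℝ 2 f) (a c : ℝ) :
    ∫ x in a..c, deriv (deriv f) x * f x
      = deriv f c * f c - deriv f a * f a - ∫ x in a..c, deriv f x ^ 2 := by
  obtain ⟨hf_diff, -, hf'⟩ := (contDiff_succ_iff_deriv (n := 1)).mp hf
  have hparts : ∫ x in a..c, (deriv (deriv f) x * f x + deriv f x * deriv f x)
      = deriv f c * f c - deriv f a * f a :=
    integral_deriv_mul_eq_sub (fun x _ ↦ (hf'.differentiable one_ne_zero x).hasDerivAt)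
      (fun x _ ↦ (hf_diff x).hasDerivAt)
      ((hf'.continuous_deriv le_rfl).intervalIntegrable _ _) (hf'.continuous.intervalIntegrable _ _)
  have hf''f : IntervalIntegrable (fun x ↦ deriv (deriv f) x * f x) MeasureTheory.volume a c :=
    ((hf'.continuous_deriv le_rfl).mul hf.continuous).intervalIntegrable _ _
  have hf'f' : IntervalIntegrable (fun x ↦ deriv f x * deriv f x) MeasureTheory.volume a c :=
    (hf'.continuous.mul hf'.continuous).intervalIntegrable _ _
  rw [integral_add hf''f hf'f'] at hparts
  simp only [sq]
  linarith

theorem integral_reaction_diffusion_mul_self {f : ℝ → ℝ} (hf : ContDiff ℝ 2 f) (d k a c : ℝ) :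
    ∫ x in a..c, (d * deriv (deriv f) x - k * f x) * f x
      = d * (deriv f c * f c - deriv f a * f a)
        - ∫ x in a..c, (d * deriv f x ^ 2 + k * f x ^ 2) := by
  obtain ⟨-, -, hf'⟩ := (contDiff_succ_iff_deriv (n := 1)).mp hf
  have hf'' : IntervalIntegrable (fun x ↦ deriv (deriv f) x * f x) MeasureTheory.volume a c :=
    ((hf'.continuous_deriv le_rfl).mul hf.continuous).intervalIntegrable _ _
  have hsq : IntervalIntegrable (fun x ↦ f x ^ 2) MeasureTheory.volume a c :=
    (hf.continuous.pow 2).intervalIntegrable _ _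
  have hsq' : IntervalIntegrable (fun x ↦ deriv f x ^ 2) MeasureTheory.volume a c :=
    (hf'.continuous.pow 2).intervalIntegrable _ _
  simp_rw [sub_mul, mul_assoc, ← sq]
  rw [integral_sub (hf''.const_mul d) (hsq.const_mul k),
    integral_add (hsq'.const_mul d) (hsq.const_mul k)]
  simp only [integral_const_mul, integral_deriv_deriv_mul_self hf]
  ring

theorem two_mul_sum_flux_mul_eq_neg_sum {ι R : Type*} [Fintype ι] [CommRing R]
    {α : ι → ι → R} (hα : ∀ i j, α i j = α j i) (u : ι → R) :
    2 * ∑ i, (∑ j, α i j * (u j - u i)) * u i = -∑ i, ∑ j, α i j * (u j - u i) ^ 2 := by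
  have hswap : ∑ i, ∑ j, α i j * (u j - u i) * u i = ∑ i, ∑ j, α i j * (u i - u j) * u j := by
    rw [sum_comm]
    exact sum_congr rfl fun i _ ↦ sum_congr rfl fun j _ ↦ by rw [hα]
  simp_rw [sum_mul]
  rw [two_mul]
  nth_rw 2 [hswap]
  rw [← sum_add_distrib, ← sum_neg_distrib]
  exact sum_congr rfl fun i _ ↦ by
    rw [← sum_add_distrib, ← sum_neg_distrib]
    exact sum_congr rfl fun j _ ↦ by ring

/-- **Dissipativity of the parabolic operator on a star network.**
The star network has a single node `N` and `m` arcs; arc `i` is the interval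
`[0, ℓ i]`, with the node at `x = ℓ i` if `inc i = true` (incoming arc
`I_i = [a_i, N]`) and at `x = 0` if `inc i = false` (outgoing arc `I_i = [N, a_i]`);
the outer vertex `a_i` is the opposite endpoint.  Assume `D_i > 0`, `b > 0`, `α`
symmetric with nonnegative entries, `φ_i ∈ C²`, the Neumann condition `φ_i'(a_i) = 0`
and the Kedem–Katchalsky conditions at the node.  Then
`∑_i ∫_{I_i} (D_i φ_i'' - b φ_i) φ_i
  = -(1/2) ∑_{i,j} α_{ij} (φ_j(N) - φ_i(N))² - ∑_i ∫_{I_i} (D_i φ_i'² + b φ_i²)`,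
and in particular the left-hand side is nonpositive. -/
theorem parabolic_operator_dissipative_star_network
    {m : ℕ} (ℓ : Fin m → ℝ) (hℓ : ∀ i, 0 < ℓ i) (inc : Fin m → Bool)
    (D : Fin m → ℝ) (hD : ∀ i, 0 < D i) (b : ℝ) (hb : 0 < b)
    (α : Fin m → Fin m → ℝ) (hαsym : ∀ i j, α i j = α j i) (hαnn : ∀ i j, 0 ≤ α i j)
    (φ : Fin m → ℝ → ℝ) (hφ : ∀ i, ContDiff ℝ 2 (φ i))
    -- value of φ_j at the node
    (φN : Fin m → ℝ) (hφN : ∀ j, φN j = if inc j then φ j (ℓ j) else φ j 0)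
    -- Neumann condition at the outer vertices
    (hbc : ∀ i, (if inc i then deriv (φ i) 0 else deriv (φ i) (ℓ i)) = 0)
    -- Kedem–Katchalsky transmission conditions at the node
    (hnode_in : ∀ i, inc i = true →
      D i * deriv (φ i) (ℓ i) = ∑ j, α i j * (φN j - φN i))
    (hnode_out : ∀ i, inc i = false →
      -(D i * deriv (φ i) 0) = ∑ j, α i j * (φN j - φN i)) :
    (∑ i, ∫ x in (0 : ℝ)..(ℓ i), (D i * deriv (deriv (φ i)) x - b * φ i x) * φ i x
      = -((1 / 2) * ∑ i, ∑ j, α i j * (φN j - φN i) ^ 2)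
        - ∑ i, ∫ x in (0 : ℝ)..(ℓ i), (D i * (deriv (φ i) x) ^ 2 + b * (φ i x) ^ 2)) ∧
    ∑ i, ∫ x in (0 : ℝ)..(ℓ i), (D i * deriv (deriv (φ i)) x - b * φ i x) * φ i x ≤ 0 := by
  have hnode : ∀ i, D i * (deriv (φ i) (ℓ i) * φ i (ℓ i) - deriv (φ i) 0 * φ i 0)
      = (∑ j, α i j * (φN j - φN i)) * φN i := by
    intro i
    have hneumann := hbc i
    have hφNi := hφN i
    cases h : inc i with
    | true =>
      simp only [h, if_true] at hneumann hφNi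
      rw [← hnode_in i h, hneumann, hφNi]; ring
    | false =>
      simp only [h, Bool.false_eq_true, if_false] at hneumann hφNi
      rw [← hnode_out i h, hneumann, hφNi]; ring
  have hidentity : ∑ i, ∫ x in (0 : ℝ)..(ℓ i), (D i * deriv (deriv (φ i)) x - b * φ i x) * φ i x
      = -((1 / 2) * ∑ i, ∑ j, α i j * (φN j - φN i) ^ 2)
        - ∑ i, ∫ x in (0 : ℝ)..(ℓ i), (D i * (deriv (φ i) x) ^ 2 + b * (φ i x) ^ 2) := by
    simp_rw [integral_reaction_diffusion_mul_self (hφ _), hnode, sum_sub_distrib]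
    linarith [two_mul_sum_flux_mul_eq_neg_sum hαsym φN]
  have hjumps : 0 ≤ ∑ i, ∑ j, α i j * (φN j - φN i) ^ 2 :=
    sum_nonneg fun i _ ↦ sum_nonneg fun j _ ↦ mul_nonneg (hαnn i j) (sq_nonneg _)
  have henergy : 0 ≤ ∑ i, ∫ x in (0 : ℝ)..(ℓ i), (D i * (deriv (φ i) x) ^ 2 + b * (φ i x) ^ 2) :=
    sum_nonneg fun i _ ↦ integral_nonneg (hℓ i).le fun x _ ↦
      add_nonneg (mul_nonneg (hD i).le (sq_nonneg _)) (mul_nonneg hb.le (sq_nonneg _))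
  exact ⟨hidentity, by linarith⟩
end

section
/- Consider a star network with a single node N and m arcs, arc I_i a compact interval joining the outer vertex a_i to N (incoming if I_i = [a_i, N], outgoing if I_i = [N, a_i]). Let λ_i > 0, let K = (K_{ij}) be a symmetric m × m matrix with nonnegative entries, and let u_i, v_i ∈ C¹(I_i) satisfy v_i(a_i) = 0 at every outer vertex and the transmission conditions at the node: −λ_i v_i(N) = Σ_{j=1}^m K_{ij}(u_j(N) − u_i(N)) for incoming i and λ_i v_i(N) = Σ_{j=1}^m K_{ij}(u_j(N) − u_i(N)) for outgoing i. Then Σ_{i=1}^m ∫_{I_i} (−λ_i v_i'(x) u_i(x) − λ_i u_i'(x) v_i(x)) dx = −(1/2) Σ_{i,j=1}^m K_{ij}(u_j(N) − u_i(N))²; in particular the left-hand side is nonpositive. -/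
/-!
On each arc the integrand is `-λ (u v)'`, so the integral is a boundary term. The condition
`v(a_i) = 0` kills the outer end, and the transmission condition turns the node end into
`u_i(N) · ∑_j K_ij (u_j(N) - u_i(N))`. Summed over the arcs this is the quadratic form of the
weighted graph Laplacian of `K`, which by symmetry of `K` equals
`-(1/2) ∑_{i,j} K_ij (u_j(N) - u_i(N))²`.
-/

open Finset intervalIntegral

theorem integral_neg_mul_deriv_mul_eq_sub {f g : ℝ → ℝ} (hf : ContDiff ℝ 1 f)
    (hg : ContDiff ℝ 1 g) (c a b : ℝ) :
    ∫ x in a..b, (-(c * deriv g x * f x) - c * deriv f x * g x)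
      = c * (f a * g a - f b * g b) := by
  have hprod : ∫ x in a..b, deriv f x * g x + f x * deriv g x = f b * g b - f a * g a :=
    integral_deriv_mul_eq_sub
      (fun x _ => (hf.differentiable one_ne_zero x).hasDerivAt)
      (fun x _ => (hg.differentiable one_ne_zero x).hasDerivAt)
      ((hf.continuous_deriv le_rfl).intervalIntegrable a b)
      ((hg.continuous_deriv le_rfl).intervalIntegrable a b)
  calc ∫ x in a..b, (-(c * deriv g x * f x) - c * deriv f x * g x)
      = ∫ x in a..b, -c * (deriv f x * g x + f x * deriv g x) :=
        integral_congr fun x _ => by ring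
    _ = c * (f a * g a - f b * g b) := by rw [integral_const_mul, hprod]; ring

theorem integral_arc_eq_node_value_mul_flux {f g : ℝ → ℝ} (hf : ContDiff ℝ 1 f)
    (hg : ContDiff ℝ 1 g) (c ℓ : ℝ) (inc : Bool) (fN flux : ℝ)
    (hfN : fN = if inc then f ℓ else f 0) (hbc : (if inc then g 0 else g ℓ) = 0)
    (hnode_in : inc = true → -(c * g ℓ) = flux) (hnode_out : inc = false → c * g 0 = flux) :
    ∫ x in (0 : ℝ)..ℓ, (-(c * deriv g x * f x) - c * deriv f x * g x) = fN * flux := by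
  rw [integral_neg_mul_deriv_mul_eq_sub hf hg]
  cases inc with
  | true =>
    simp only [if_true] at hfN hbc
    rw [← hnode_in rfl, hfN, hbc]
    ring
  | false =>
    simp only [Bool.false_eq_true, if_false] at hfN hbc
    rw [← hnode_out rfl, hfN, hbc]
    ring

theorem sum_mul_sum_mul_sub_eq_neg_half_sum_mul_sq {ι : Type*} [Fintype ι]
    (K : ι → ι → ℝ) (hK : ∀ i j, K i j = K j i) (w : ι → ℝ) :
    ∑ i, w i * ∑ j, K i j * (w j - w i)
      = -((1 / 2) * ∑ i, ∑ j, K i j * (w j - w i) ^ 2) := by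
  have hS : ∑ i, w i * ∑ j, K i j * (w j - w i) = ∑ i, ∑ j, K i j * (w j - w i) * w i :=
    sum_congr rfl fun i _ => by rw [mul_sum]; exact sum_congr rfl fun j _ => by ring
  have hswap : ∑ i, ∑ j, K i j * (w j - w i) * w i = ∑ i, ∑ j, K i j * (w i - w j) * w j := by
    rw [sum_comm]
    exact sum_congr rfl fun i _ => sum_congr rfl fun j _ => by rw [hK]
  have hdouble : ∑ i, ∑ j, K i j * (w j - w i) * w i + ∑ i, ∑ j, K i j * (w i - w j) * w j
      = -∑ i, ∑ j, K i j * (w j - w i) ^ 2 := by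
    simp only [← sum_add_distrib, ← sum_neg_distrib]
    exact sum_congr rfl fun i _ => sum_congr rfl fun j _ => by ring
  linarith

theorem hyperbolic_operator_dissipative_star_network_general
    {m : ℕ} (ℓ : Fin m → ℝ) (inc : Fin m → Bool)
    (lam : Fin m → ℝ)
    (K : Fin m → Fin m → ℝ) (hKsym : ∀ i j, K i j = K j i) (hKnn : ∀ i j, 0 ≤ K i j)
    (u v : Fin m → ℝ → ℝ)
    (hu : ∀ i, ContDiff ℝ 1 (u i)) (hv : ∀ i, ContDiff ℝ 1 (v i))
    -- value of u_j at the node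
    (uN : Fin m → ℝ) (huN : ∀ j, uN j = if inc j then u j (ℓ j) else u j 0)
    -- boundary condition at the outer vertices
    (hbc : ∀ i, (if inc i then v i 0 else v i (ℓ i)) = 0)
    -- transmission conditions at the node
    (hnode_in : ∀ i, inc i = true →
      -(lam i * v i (ℓ i)) = ∑ j, K i j * (uN j - uN i))
    (hnode_out : ∀ i, inc i = false →
      lam i * v i 0 = ∑ j, K i j * (uN j - uN i)) :
    (∑ i, ∫ x in (0 : ℝ)..(ℓ i),
        (-(lam i * deriv (v i) x * u i x) - lam i * deriv (u i) x * v i x)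
      = -((1 / 2) * ∑ i, ∑ j, K i j * (uN j - uN i) ^ 2)) ∧
    ∑ i, ∫ x in (0 : ℝ)..(ℓ i),
        (-(lam i * deriv (v i) x * u i x) - lam i * deriv (u i) x * v i x) ≤ 0 := by
  have harcs : (∑ i, ∫ x in (0 : ℝ)..(ℓ i),
      (-(lam i * deriv (v i) x * u i x) - lam i * deriv (u i) x * v i x))
      = ∑ i, uN i * ∑ j, K i j * (uN j - uN i) :=
    sum_congr rfl fun i _ => integral_arc_eq_node_value_mul_flux (hu i) (hv i) _ _ _ _ _
      (huN i) (hbc i) (hnode_in i) (hnode_out i)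
  rw [harcs, sum_mul_sum_mul_sub_eq_neg_half_sum_mul_sq K hKsym uN]
  refine ⟨rfl, ?_⟩
  have hdirichlet : 0 ≤ ∑ i, ∑ j, K i j * (uN j - uN i) ^ 2 :=
    sum_nonneg fun i _ => sum_nonneg fun j _ => mul_nonneg (hKnn i j) (sq_nonneg _)
  linarith

/-- **Dissipativity of the hyperbolic operator on a star network.**
The star network has a single node `N` and `m` arcs; arc `i` is the interval
`[0, ℓ i]`, with the node at `x = ℓ i` if `inc i = true` (incoming arc
`I_i = [a_i, N]`) and at `x = 0` if `inc i = false` (outgoing arc `I_i = [N, a_i]`);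
the outer vertex `a_i` is the opposite endpoint.  Assume `λ_i > 0`, `K` symmetric
with nonnegative entries, `u_i, v_i ∈ C¹`, `v_i(a_i) = 0`, and the transmission
conditions at the node.  Then
`∑_i ∫_{I_i} (-λ_i v_i' u_i - λ_i u_i' v_i)
  = -(1/2) ∑_{i,j} K_{ij} (u_j(N) - u_i(N))²`,
and in particular the left-hand side is nonpositive. -/
theorem hyperbolic_operator_dissipative_star_network
    {m : ℕ} (ℓ : Fin m → ℝ) (hℓ : ∀ i, 0 < ℓ i) (inc : Fin m → Bool)
    (lam : Fin m → ℝ) (hlam : ∀ i, 0 < lam i)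
    (K : Fin m → Fin m → ℝ) (hKsym : ∀ i j, K i j = K j i) (hKnn : ∀ i j, 0 ≤ K i j)
    (u v : Fin m → ℝ → ℝ)
    (hu : ∀ i, ContDiff ℝ 1 (u i)) (hv : ∀ i, ContDiff ℝ 1 (v i))
    -- value of u_j at the node
    (uN : Fin m → ℝ) (huN : ∀ j, uN j = if inc j then u j (ℓ j) else u j 0)
    -- boundary condition at the outer vertices
    (hbc : ∀ i, (if inc i then v i 0 else v i (ℓ i)) = 0)
    -- transmission conditions at the node
    (hnode_in : ∀ i, inc i = true →
      -(lam i * v i (ℓ i)) = ∑ j, K i j * (uN j - uN i))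
    (hnode_out : ∀ i, inc i = false →
      lam i * v i 0 = ∑ j, K i j * (uN j - uN i)) :
    (∑ i, ∫ x in (0 : ℝ)..(ℓ i),
        (-(lam i * deriv (v i) x * u i x) - lam i * deriv (u i) x * v i x)
      = -((1 / 2) * ∑ i, ∑ j, K i j * (uN j - uN i) ^ 2)) ∧
    ∑ i, ∫ x in (0 : ℝ)..(ℓ i),
        (-(lam i * deriv (v i) x * u i x) - lam i * deriv (u i) x * v i x) ≤ 0 :=
  hyperbolic_operator_dissipative_star_network_general ℓ inc lam K hKsym hKnn u v hu hv uN huN hbc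
    hnode_in hnode_out
end

section
/- Consider a star network with a single node N and m arcs, arc I_i a compact interval joining the outer vertex a_i to N (incoming if I_i = [a_i, N], outgoing if I_i = [N, a_i]). Let D_i > 0, b > 0, and let α = (α_{ij}) be a symmetric m × m matrix with nonnegative entries. Then for every family f = (f_i) with f_i continuous on I_i, there exists a unique φ = (φ_i) with φ_i ∈ C²(I_i) such that −D_i φ_i''(x) + (1+b) φ_i(x) = f_i(x) on I_i for every i, with the Neumann conditions φ_i'(a_i) = 0 at every outer vertex and the Kedem–Katchalsky transmission conditions at the node: D_i φ_i'(N) = Σ_{j=1}^m α_{ij}(φ_j(N) − φ_i(N)) for incoming i and −D_i φ_i'(N) = Σ_{j=1}^m α_{ij}(φ_j(N) − φ_i(N)) for outgoing i. -/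
/-!
On an arc with the node at `x = L`, the solutions of `-D φ'' + c φ = F` with `φ'(0) = 0` are
`v cosh (μ x) + Q x`, `μ = √(c / D)`, with `Q` obtained by variation of constants. Prescribing
the node value `u` fixes `v`, and the flux `D φ'(L)` is then `κ u + r` with
`κ = D μ tanh (μ L) > 0`. The Kedem–Katchalsky conditions therefore become the linear system
`κ_i u_i + r_i = Σ_j α_ij (u_j - u_i)`, which is injective, hence solvable, because for symmetric
`α ≥ 0` one has `Σ_i u_i Σ_j α_ij (u_j - u_i) = -½ Σ_ij α_ij (u_i - u_j)² ≤ 0`.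
The same inequality gives uniqueness: for the difference `w` of two solutions, integration by
parts yields `Σ_i (c ∫ w_i² + D_i ∫ w_i'²) = Σ_i w_i(N) Σ_j α_ij (w_j(N) - w_i(N)) ≤ 0`.
-/

open Finset Set Real

section NodalSystem

variable {ι : Type*} [Fintype ι] {α : ι → ι → ℝ}

theorem sum_mul_sum_mul_sub_nonpos (hsym : ∀ i j, α i j = α j i) (hnn : ∀ i j, 0 ≤ α i j)
    (u : ι → ℝ) : ∑ i, u i * ∑ j, α i j * (u j - u i) ≤ 0 := by
  set S := ∑ i, ∑ j, α i j * (u i * (u j - u i))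
  have hS : ∑ i, u i * ∑ j, α i j * (u j - u i) = S := by
    simp only [S, Finset.mul_sum]; congr! 2 with i _ j _; ring
  -- swapping `i` and `j` and averaging turns `S` into `-½ Σ α_ij (u_i - u_j)²`
  have hswap : S = ∑ i, ∑ j, α i j * (u j * (u i - u j)) := by
    simp only [S]; rw [Finset.sum_comm]; simp only [hsym]
  have htwice : 2 * S = -∑ i, ∑ j, α i j * (u i - u j) ^ 2 := by
    rw [two_mul]; nth_rewrite 2 [hswap]
    simp only [S, ← Finset.sum_add_distrib, ← Finset.sum_neg_distrib]
    congr! 2 with i _ j _; ring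
  have hsq : 0 ≤ ∑ i, ∑ j, α i j * (u i - u j) ^ 2 :=
    sum_nonneg fun i _ => sum_nonneg fun j _ => mul_nonneg (hnn i j) (sq_nonneg _)
  linarith

theorem exists_mul_add_eq_sum_mul_sub {κ : ι → ℝ} (hκ : ∀ i, 0 < κ i)
    (hsym : ∀ i j, α i j = α j i) (hnn : ∀ i j, 0 ≤ α i j) (r : ι → ℝ) :
    ∃ u : ι → ℝ, ∀ i, κ i * u i + r i = ∑ j, α i j * (u j - u i) := by
  let coord : ι → (ι → ℝ) →ₗ[ℝ] ℝ := LinearMap.proj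
  let T : (ι → ℝ) →ₗ[ℝ] (ι → ℝ) := LinearMap.pi fun i =>
    κ i • coord i - ∑ j, α i j • (coord j - coord i)
  have hT : ∀ u i, T u i = κ i * u i - ∑ j, α i j * (u j - u i) := by
    intro u i; simp [T, coord]
  have hinj : Function.Injective T := by
    rw [← LinearMap.ker_eq_bot, LinearMap.ker_eq_bot']
    intro u hu
    have hκu : ∀ i, κ i * u i = ∑ j, α i j * (u j - u i) := fun i => by
      simpa [hT, sub_eq_zero] using congrFun hu i
    have hnonpos : ∑ i, κ i * u i ^ 2 ≤ 0 := by
      calc ∑ i, κ i * u i ^ 2 = ∑ i, u i * ∑ j, α i j * (u j - u i) := by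
            congr! 1 with i; rw [← hκu]; ring
        _ ≤ 0 := sum_mul_sum_mul_sub_nonpos hsym hnn u
    have hzero := (sum_eq_zero_iff_of_nonneg fun i _ => mul_nonneg (hκ i).le (sq_nonneg (u i))).mp
      (le_antisymm hnonpos (sum_nonneg fun i _ => mul_nonneg (hκ i).le (sq_nonneg (u i))))
    funext i
    simpa [(hκ i).ne'] using hzero i (mem_univ i)
  obtain ⟨u, hu⟩ := LinearMap.injective_iff_surjective.mp hinj (-r)
  refine ⟨u, fun i => ?_⟩
  have hi : T u i = -r i := congrFun hu i
  linarith [hT u i]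

end NodalSystem

theorem contDiff_two_iff_deriv {f : ℝ → ℝ} :
    ContDiff ℝ 2 f ↔
      Differentiable ℝ f ∧ Differentiable ℝ (deriv f) ∧ Continuous (deriv (deriv f)) := by
  rw [show (2 : WithTop ℕ∞) = 1 + 1 from rfl, contDiff_succ_iff_deriv, contDiff_one_iff_deriv]
  simp

theorem hasDerivAt_cosh_mul (μ x : ℝ) :
    HasDerivAt (fun y => cosh (μ * y)) (μ * sinh (μ * x)) x := by
  simpa [mul_comm] using ((hasDerivAt_id x).const_mul μ).cosh

theorem hasDerivAt_sinh_mul (μ x : ℝ) :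
    HasDerivAt (fun y => sinh (μ * y)) (μ * cosh (μ * x)) x := by
  simpa [mul_comm] using ((hasDerivAt_id x).const_mul μ).sinh

theorem deriv_deriv_comp_const_sub (f : ℝ → ℝ) (a x : ℝ) :
    deriv (deriv fun y => f (a - y)) x = deriv (deriv f) (a - x) := by
  have h : deriv (fun y => f (a - y)) = fun y => -deriv f (a - y) :=
    funext fun y => deriv_comp_const_sub f a y
  rw [h, deriv.fun_neg, deriv_comp_const_sub, neg_neg]

theorem eqOn_zero_of_integral_sq_eq_zero {a b : ℝ} (hab : a < b) {w : ℝ → ℝ} (hw : Continuous w)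
    (h : ∫ x in a..b, w x ^ 2 = 0) : EqOn w 0 (Icc a b) := by
  intro x hx
  by_contra hne
  have : 0 < ∫ x in a..b, w x ^ 2 :=
    intervalIntegral.integral_pos hab (hw.pow 2).continuousOn (fun y _ => sq_nonneg _)
      ⟨x, hx, lt_of_le_of_ne (sq_nonneg _) (pow_ne_zero 2 hne).symm⟩
  linarith

section ArcProblem

variable {D c L : ℝ} {F : ℝ → ℝ}

/-- Variation of constants with the fundamental system `cosh (μ x)`, `sinh (μ x)`. -/
theorem exists_particular_solution (hD : D ≠ 0) {μ : ℝ} (hμ : μ ≠ 0) (hF : Continuous F) :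
    ∃ Q : ℝ → ℝ, ContDiff ℝ 2 Q ∧
      (∀ x, -(D * deriv (deriv Q) x) + D * μ ^ 2 * Q x = F x) ∧ Q 0 = 0 ∧ deriv Q 0 = 0 := by
  set A : ℝ → ℝ := fun x => ∫ t in 0..x, cosh (μ * t) * F t
  set B : ℝ → ℝ := fun x => ∫ t in 0..x, sinh (μ * t) * F t
  have hA : ∀ x, HasDerivAt A (cosh (μ * x) * F x) x := fun x =>
    ((continuous_cosh.comp (continuous_const_mul μ)).mul hF).integral_hasStrictDerivAt 0 x
      |>.hasDerivAt
  have hB : ∀ x, HasDerivAt B (sinh (μ * x) * F x) x := fun x =>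
    ((continuous_sinh.comp (continuous_const_mul μ)).mul hF).integral_hasStrictDerivAt 0 x
      |>.hasDerivAt
  set Q : ℝ → ℝ := fun x => (cosh (μ * x) * B x - sinh (μ * x) * A x) / (D * μ)
  set G : ℝ → ℝ := fun x => (sinh (μ * x) * B x - cosh (μ * x) * A x) / D
  have hQ : ∀ x, HasDerivAt Q (G x) x := fun x => by
    refine ((((hasDerivAt_cosh_mul μ x).mul (hB x)).sub
      ((hasDerivAt_sinh_mul μ x).mul (hA x))).div_const (D * μ)).congr_deriv ?_
    simp only [G]; field_simp; ring
  have hG : ∀ x, HasDerivAt G (μ ^ 2 * Q x - F x / D) x := fun x => by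
    refine ((((hasDerivAt_sinh_mul μ x).mul (hB x)).sub
      ((hasDerivAt_cosh_mul μ x).mul (hA x))).div_const D).congr_deriv ?_
    simp only [Q]; field_simp
    linear_combination -F x * cosh_sq_sub_sinh_sq (μ * x)
  have hdQ : deriv Q = G := funext fun x => (hQ x).deriv
  have hddQ : deriv (deriv Q) = fun x => μ ^ 2 * Q x - F x / D :=
    funext fun x => hdQ ▸ (hG x).deriv
  have hQdiff : Differentiable ℝ Q := fun x => (hQ x).differentiableAt
  refine ⟨Q, contDiff_two_iff_deriv.mpr ⟨hQdiff, hdQ ▸ fun x => (hG x).differentiableAt, ?_⟩,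
    fun x => ?_, by simp [Q, A, B], by simp [hdQ, G, A, B]⟩
  · rw [hddQ]; fun_prop
  · rw [hddQ]; field_simp; ring

theorem exists_neumann_arc_solution (hD : 0 < D) (hc : 0 < c) (hL : 0 < L) (hF : Continuous F) :
    ∃ κ r : ℝ, 0 < κ ∧ ∀ u : ℝ, ∃ χ : ℝ → ℝ, ContDiff ℝ 2 χ ∧
      (∀ x, -(D * deriv (deriv χ) x) + c * χ x = F x) ∧
      deriv χ 0 = 0 ∧ χ L = u ∧ D * deriv χ L = κ * u + r := by
  set μ := √(c / D)
  have hμ : 0 < μ := sqrt_pos.mpr (div_pos hc hD)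
  have hDμ : D * μ ^ 2 = c := by
    rw [sq_sqrt (div_pos hc hD).le]; field_simp
  obtain ⟨Q, hQ, hQode, hQ0, hdQ0⟩ := exists_particular_solution hD.ne' hμ.ne' hF
  obtain ⟨hQ1, hQ2, -⟩ := contDiff_two_iff_deriv.mp hQ
  have hcosh : 0 < cosh (μ * L) := cosh_pos _
  have hsinh : 0 < sinh (μ * L) := sinh_pos_iff.mpr (by positivity)
  set κ := D * μ * sinh (μ * L) / cosh (μ * L)
  refine ⟨κ, D * deriv Q L - κ * Q L, by positivity, fun u => ?_⟩
  -- the Neumann solutions are `v cosh (μ x) + Q x`; the node value `u` fixes `v`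
  set v := (u - Q L) / cosh (μ * L)
  set χ : ℝ → ℝ := fun x => v * cosh (μ * x) + Q x
  have hdχ : deriv χ = fun x => v * (μ * sinh (μ * x)) + deriv Q x :=
    funext fun x => (((hasDerivAt_cosh_mul μ x).const_mul v).add (hQ1 x).hasDerivAt).deriv
  have hddχ : ∀ x, deriv (deriv χ) x = v * (μ * (μ * cosh (μ * x))) + deriv (deriv Q) x := by
    intro x
    rw [hdχ]
    exact ((((hasDerivAt_sinh_mul μ x).const_mul μ).const_mul v).add (hQ2 x).hasDerivAt).deriv
  refine ⟨χ, (contDiff_const.mul (contDiff_cosh.comp (contDiff_const.mul contDiff_id))).add hQ,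
    fun x => ?_, by simp [hdχ, hdQ0], ?_, ?_⟩
  · rw [hddχ, ← hDμ, ← hQode x]; ring
  · simp only [χ, v]; field_simp; ring
  · rw [hdχ]; simp only [v, κ]; field_simp; ring

end ArcProblem

/-- The arc is `[0, L]`, with the node at `L` if `inc` (incoming arc) and at `0` otherwise. -/
def nodeValue (L : ℝ) (inc : Bool) (φ : ℝ → ℝ) : ℝ := if inc then φ L else φ 0

/-- `D φ'` at the node, taken in the direction pointing into the node. -/
noncomputable def nodeFlux (D L : ℝ) (inc : Bool) (φ : ℝ → ℝ) : ℝ :=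
  if inc then D * deriv φ L else -(D * deriv φ 0)

structure IsArcSolution (D c L : ℝ) (inc : Bool) (F φ : ℝ → ℝ) : Prop where
  contDiff : ContDiff ℝ 2 φ
  ode : ∀ x ∈ Icc 0 L, -(D * deriv (deriv φ) x) + c * φ x = F x
  neumann : (if inc then deriv φ 0 else deriv φ L) = 0

theorem exists_isArcSolution {D c L : ℝ} {F : ℝ → ℝ} (inc : Bool) (hD : 0 < D) (hc : 0 < c)
    (hL : 0 < L) (hF : ContinuousOn F (Icc 0 L)) :
    ∃ κ r : ℝ, 0 < κ ∧ ∀ u : ℝ, ∃ φ : ℝ → ℝ,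
      IsArcSolution D c L inc F φ ∧ nodeValue L inc φ = u ∧ nodeFlux D L inc φ = κ * u + r := by
  set G : ℝ → ℝ := fun x => F (projIcc 0 L hL.le x)
  have hG : Continuous G := hF.comp_continuous (continuous_subtype_val.comp continuous_projIcc)
    fun x => (projIcc 0 L hL.le x).2
  have hGF : EqOn G F (Icc 0 L) := fun x hx => by simp [G, projIcc_of_mem _ hx]
  cases inc
  · -- outgoing arcs are the reflection `x ↦ L - x` of the incoming case
    obtain ⟨κ, r, hκ, hsol⟩ :=
      exists_neumann_arc_solution hD hc hL (hG.comp (continuous_sub_left L))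
    refine ⟨κ, r, hκ, fun u => ?_⟩
    obtain ⟨χ, hχ, hode, hχ0, hχL, hflux⟩ := hsol u
    refine ⟨fun x => χ (L - x), ⟨hχ.comp (contDiff_const.sub contDiff_id), fun x hx => ?_, ?_⟩,
      by simpa [nodeValue] using hχL, by simpa [nodeFlux, deriv_comp_const_sub] using hflux⟩
    · rw [← hGF hx]
      simpa [deriv_deriv_comp_const_sub] using hode (L - x)
    · simpa [deriv_comp_const_sub] using hχ0
  · obtain ⟨κ, r, hκ, hsol⟩ := exists_neumann_arc_solution hD hc hL hG
    refine ⟨κ, r, hκ, fun u => ?_⟩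
    obtain ⟨χ, hχ, hode, hχ0, hχL, hflux⟩ := hsol u
    exact ⟨χ, ⟨hχ, fun x hx => hGF hx ▸ hode x, by simpa using hχ0⟩,
      by simpa [nodeValue] using hχL, by simpa [nodeFlux] using hflux⟩

theorem nodeValue_sub (L : ℝ) (inc : Bool) (φ ψ : ℝ → ℝ) :
    nodeValue L inc (φ - ψ) = nodeValue L inc φ - nodeValue L inc ψ := by
  cases inc <;> rfl

theorem nodeFlux_sub (D L : ℝ) (inc : Bool) {φ ψ : ℝ → ℝ} (hφ : Differentiable ℝ φ)
    (hψ : Differentiable ℝ ψ) :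
    nodeFlux D L inc (φ - ψ) = nodeFlux D L inc φ - nodeFlux D L inc ψ := by
  cases inc <;> simp [nodeFlux, deriv_sub (hφ _) (hψ _)] <;> ring

namespace IsArcSolution

variable {D c L : ℝ} {inc : Bool} {F G φ ψ w : ℝ → ℝ}

theorem sub (hφ : IsArcSolution D c L inc F φ) (hψ : IsArcSolution D c L inc G ψ) :
    IsArcSolution D c L inc (F - G) (φ - ψ) := by
  obtain ⟨hφ1, hφ2, -⟩ := contDiff_two_iff_deriv.mp hφ.contDiff
  obtain ⟨hψ1, hψ2, -⟩ := contDiff_two_iff_deriv.mp hψ.contDiff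
  have hd : deriv (φ - ψ) = deriv φ - deriv ψ := funext fun x => deriv_sub (hφ1 x) (hψ1 x)
  have hdd : deriv (deriv (φ - ψ)) = deriv (deriv φ) - deriv (deriv ψ) := by
    rw [hd]; exact funext fun x => deriv_sub (hφ2 x) (hψ2 x)
  refine ⟨hφ.contDiff.sub hψ.contDiff, fun x hx => ?_, ?_⟩
  · simp only [hdd, Pi.sub_apply]
    linear_combination hφ.ode x hx - hψ.ode x hx
  · have := hφ.neumann; have := hψ.neumann
    cases inc <;> simp_all

/-- Multiplying the equation by `w` and integrating by parts; the Neumann condition kills the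
boundary term at the outer vertex. -/
theorem energy_eq (h : IsArcSolution D c L inc 0 w) (hL : 0 ≤ L) :
    c * (∫ x in 0..L, w x ^ 2) + D * ∫ x in 0..L, deriv w x ^ 2 =
      nodeFlux D L inc w * nodeValue L inc w := by
  obtain ⟨hw1, hw2, hw3⟩ := contDiff_two_iff_deriv.mp h.contDiff
  have hparts : ∫ x in 0..L, deriv w x * deriv w x =
      deriv w L * w L - deriv w 0 * w 0 - ∫ x in 0..L, deriv (deriv w) x * w x :=
    intervalIntegral.integral_mul_deriv_eq_deriv_mul (fun x _ => (hw2 x).hasDerivAt)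
      (fun x _ => (hw1 x).hasDerivAt) (hw3.intervalIntegrable _ _)
      (hw2.continuous.intervalIntegrable _ _)
  have hode : D * ∫ x in 0..L, deriv (deriv w) x * w x = c * ∫ x in 0..L, w x ^ 2 := by
    rw [← intervalIntegral.integral_const_mul, ← intervalIntegral.integral_const_mul]
    refine intervalIntegral.integral_congr fun x hx => ?_
    rw [uIcc_of_le hL] at hx
    have := h.ode x hx
    simp only [Pi.zero_apply] at this
    linear_combination -w x * this
  have hneumann := h.neumann
  rw [show ∫ x in 0..L, deriv w x ^ 2 = ∫ x in 0..L, deriv w x * deriv w x by simp only [sq],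
    hparts]
  cases inc <;> simp only [nodeFlux, nodeValue, Bool.false_eq_true, ↓reduceIte] at hneumann ⊢ <;>
    rw [hneumann] <;> linear_combination -hode

end IsArcSolution

structure IsNetworkSolution {ι : Type*} [Fintype ι] (ℓ : ι → ℝ) (inc : ι → Bool) (D : ι → ℝ)
    (c : ℝ) (α : ι → ι → ℝ) (f φ : ι → ℝ → ℝ) : Prop where
  arc : ∀ i, IsArcSolution (D i) c (ℓ i) (inc i) (f i) (φ i)
  kedemKatchalsky : ∀ i, nodeFlux (D i) (ℓ i) (inc i) (φ i) =
    ∑ j, α i j * (nodeValue (ℓ j) (inc j) (φ j) - nodeValue (ℓ i) (inc i) (φ i))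

namespace IsNetworkSolution

variable {ι : Type*} [Fintype ι] {ℓ : ι → ℝ} {inc : ι → Bool} {D : ι → ℝ} {c : ℝ}
  {α : ι → ι → ℝ} {f g φ ψ w : ι → ℝ → ℝ}

theorem sub (hφ : IsNetworkSolution ℓ inc D c α f φ) (hψ : IsNetworkSolution ℓ inc D c α g ψ) :
    IsNetworkSolution ℓ inc D c α (f - g) (φ - ψ) := by
  refine ⟨fun i => (hφ.arc i).sub (hψ.arc i), fun i => ?_⟩
  rw [Pi.sub_apply, nodeFlux_sub _ _ _ ((hφ.arc i).contDiff.differentiable (by norm_num))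
    ((hψ.arc i).contDiff.differentiable (by norm_num)), hφ.kedemKatchalsky i,
    hψ.kedemKatchalsky i, ← sum_sub_distrib]
  simp only [Pi.sub_apply, nodeValue_sub]
  congr! 1 with j
  ring

/-- The arc energies add up to the nonpositive quadratic form of the node values. -/
theorem eqOn_zero (h : IsNetworkSolution ℓ inc D c α 0 w) (hℓ : ∀ i, 0 < ℓ i)
    (hD : ∀ i, 0 < D i) (hc : 0 < c) (hsym : ∀ i j, α i j = α j i) (hnn : ∀ i j, 0 ≤ α i j)
    (i : ι) : EqOn (w i) 0 (Icc 0 (ℓ i)) := by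
  set I : ι → ℝ := fun j => ∫ x in 0..ℓ j, w j x ^ 2
  set J : ι → ℝ := fun j => ∫ x in 0..ℓ j, deriv (w j) x ^ 2
  have hI : ∀ j, 0 ≤ I j := fun j =>
    intervalIntegral.integral_nonneg (hℓ j).le fun x _ => sq_nonneg _
  have hJ : ∀ j, 0 ≤ J j := fun j =>
    intervalIntegral.integral_nonneg (hℓ j).le fun x _ => sq_nonneg _
  have hE : ∀ j ∈ Finset.univ, 0 ≤ c * I j + D j * J j := fun j _ =>
    add_nonneg (mul_nonneg hc.le (hI j)) (mul_nonneg (hD j).le (hJ j))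
  set ν : ι → ℝ := fun j => nodeValue (ℓ j) (inc j) (w j)
  have hsum : ∑ j, (c * I j + D j * J j) ≤ 0 :=
    calc ∑ j, (c * I j + D j * J j) = ∑ j, ν j * ∑ k, α j k * (ν k - ν j) := by
          congr! 1 with j
          rw [(h.arc j).energy_eq (hℓ j).le, h.kedemKatchalsky j, mul_comm]
      _ ≤ 0 := sum_mul_sum_mul_sub_nonpos hsym hnn ν
  have hEi : c * I i + D i * J i = 0 :=
    (sum_eq_zero_iff_of_nonneg hE).mp (le_antisymm hsum (sum_nonneg hE)) i (Finset.mem_univ i)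
  have hIi : I i = 0 := by
    nlinarith [mul_nonneg hc.le (hI i), mul_nonneg (hD i).le (hJ i)]
  exact eqOn_zero_of_integral_sq_eq_zero (hℓ i) (h.arc i).contDiff.continuous hIi

theorem eqOn (hφ : IsNetworkSolution ℓ inc D c α f φ) (hψ : IsNetworkSolution ℓ inc D c α f ψ)
    (hℓ : ∀ i, 0 < ℓ i) (hD : ∀ i, 0 < D i) (hc : 0 < c) (hsym : ∀ i j, α i j = α j i)
    (hnn : ∀ i j, 0 ≤ α i j) (i : ι) : EqOn (φ i) (ψ i) (Icc 0 (ℓ i)) := by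
  have hdiff := hφ.sub hψ
  rw [sub_self] at hdiff
  exact fun x hx => sub_eq_zero.mp (hdiff.eqOn_zero hℓ hD hc hsym hnn i hx)

end IsNetworkSolution

section Network

variable {ι : Type*} [Fintype ι] {ℓ : ι → ℝ} {inc : ι → Bool} {D : ι → ℝ} {c : ℝ}
  {α : ι → ι → ℝ} {f : ι → ℝ → ℝ}

theorem exists_isNetworkSolution (hℓ : ∀ i, 0 < ℓ i) (hD : ∀ i, 0 < D i) (hc : 0 < c)
    (hsym : ∀ i j, α i j = α j i) (hnn : ∀ i j, 0 ≤ α i j)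
    (hf : ∀ i, ContinuousOn (f i) (Icc 0 (ℓ i))) :
    ∃ φ, IsNetworkSolution ℓ inc D c α f φ := by
  choose κ r hκ hsol using fun i => exists_isArcSolution (inc i) (hD i) hc (hℓ i) (hf i)
  obtain ⟨u, hu⟩ := exists_mul_add_eq_sum_mul_sub hκ hsym hnn r
  choose φ hφ hvalue hflux using fun i => hsol i (u i)
  exact ⟨φ, hφ, fun i => by simp only [hflux, hvalue, hu]⟩

theorem isNetworkSolution_iff {φ : ι → ℝ → ℝ} :
    IsNetworkSolution ℓ inc D c α f φ ↔
      (∀ i, ContDiff ℝ 2 (φ i)) ∧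
      (∀ i, ∀ x ∈ Icc 0 (ℓ i), -(D i * deriv (deriv (φ i)) x) + c * φ i x = f i x) ∧
      (∀ i, (if inc i then deriv (φ i) 0 else deriv (φ i) (ℓ i)) = 0) ∧
      (∀ i, inc i = true → D i * deriv (φ i) (ℓ i) = ∑ j,
        α i j * ((if inc j then φ j (ℓ j) else φ j 0) - (if inc i then φ i (ℓ i) else φ i 0))) ∧
      (∀ i, inc i = false → -(D i * deriv (φ i) 0) = ∑ j,
        α i j * ((if inc j then φ j (ℓ j) else φ j 0) - (if inc i then φ i (ℓ i) else φ i 0)))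
    := by
  constructor
  · rintro ⟨harc, hkk⟩
    refine ⟨fun i => (harc i).contDiff, fun i => (harc i).ode, fun i => (harc i).neumann,
      fun i hi => ?_, fun i hi => ?_⟩
    · have := hkk i
      rwa [nodeFlux, if_pos hi] at this
    · have := hkk i
      rwa [nodeFlux, if_neg (Bool.eq_false_iff.mp hi)] at this
  · rintro ⟨hcd, hode, hneumann, hin, hout⟩
    refine ⟨fun i => ⟨hcd i, hode i, hneumann i⟩, fun i => ?_⟩
    unfold nodeFlux
    split_ifs with hi
    · exact hin i hi
    · exact hout i (Bool.eq_false_iff.mpr hi)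

end Network

/-- **Solvability of the resolvent problem for the parabolic network operator.**
The star network has a single node `N` and `m` arcs; arc `i` is the interval
`[0, ℓ i]`, with the node at `x = ℓ i` if `inc i = true` (incoming arc
`I_i = [a_i, N]`) and at `x = 0` otherwise (outgoing arc `I_i = [N, a_i]`);
the outer vertex `a_i` is the opposite endpoint.  Assume `D_i > 0`, `b > 0` and `α`
symmetric with nonnegative entries.  Then for every family `f = (f_i)` of functions
continuous on `I_i` there exists a `φ = (φ_i)` with `φ_i ∈ C²` satisfying
`-D_i φ_i'' + (1+b) φ_i = f_i` on `I_i`, the Neumann conditions `φ_i'(a_i) = 0` and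
the Kedem–Katchalsky conditions at the node, and `φ` is unique (any two such
solutions agree on each arc `I_i`). -/
theorem resolvent_solvable_parabolic_star_network
    {m : ℕ} (ℓ : Fin m → ℝ) (hℓ : ∀ i, 0 < ℓ i) (inc : Fin m → Bool)
    (D : Fin m → ℝ) (hD : ∀ i, 0 < D i) (b : ℝ) (hb : 0 < b)
    (α : Fin m → Fin m → ℝ) (hαsym : ∀ i j, α i j = α j i) (hαnn : ∀ i j, 0 ≤ α i j)
    (f : Fin m → ℝ → ℝ) (hf : ∀ i, ContinuousOn (f i) (Set.Icc 0 (ℓ i))) :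
    ∃ φ : Fin m → ℝ → ℝ,
      ((∀ i, ContDiff ℝ 2 (φ i)) ∧
       (∀ i, ∀ x ∈ Set.Icc (0 : ℝ) (ℓ i),
          -(D i * deriv (deriv (φ i)) x) + (1 + b) * φ i x = f i x) ∧
       (∀ i, (if inc i then deriv (φ i) 0 else deriv (φ i) (ℓ i)) = 0) ∧
       (∀ i, inc i = true →
          D i * deriv (φ i) (ℓ i) = ∑ j,
            α i j * ((if inc j then φ j (ℓ j) else φ j 0)
              - (if inc i then φ i (ℓ i) else φ i 0))) ∧
       (∀ i, inc i = false →
          -(D i * deriv (φ i) 0) = ∑ j,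
            α i j * ((if inc j then φ j (ℓ j) else φ j 0)
              - (if inc i then φ i (ℓ i) else φ i 0)))) ∧
      (∀ ψ : Fin m → ℝ → ℝ,
        ((∀ i, ContDiff ℝ 2 (ψ i)) ∧
         (∀ i, ∀ x ∈ Set.Icc (0 : ℝ) (ℓ i),
            -(D i * deriv (deriv (ψ i)) x) + (1 + b) * ψ i x = f i x) ∧
         (∀ i, (if inc i then deriv (ψ i) 0 else deriv (ψ i) (ℓ i)) = 0) ∧
         (∀ i, inc i = true →
            D i * deriv (ψ i) (ℓ i) = ∑ j,
              α i j * ((if inc j then ψ j (ℓ j) else ψ j 0)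
                - (if inc i then ψ i (ℓ i) else ψ i 0))) ∧
         (∀ i, inc i = false →
            -(D i * deriv (ψ i) 0) = ∑ j,
              α i j * ((if inc j then ψ j (ℓ j) else ψ j 0)
                - (if inc i then ψ i (ℓ i) else ψ i 0)))) →
        ∀ i, ∀ x ∈ Set.Icc (0 : ℝ) (ℓ i), ψ i x = φ i x) := by
  have hc : 0 < 1 + b := by linarith
  obtain ⟨φ, hφ⟩ := exists_isNetworkSolution (inc := inc) hℓ hD hc hαsym hαnn hf
  refine ⟨φ, isNetworkSolution_iff.mp hφ, fun ψ hψ i x hx => ?_⟩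
  exact (isNetworkSolution_iff.mpr hψ).eqOn hφ hℓ hD hc hαsym hαnn i hx
end

section
/- Let (u, v, φ) be a local solution on [0,T] of the hyperbolic–parabolic chemotaxis system on a network. Then there exists a constant C > 0, depending only on the parameters of the problem, such that Σ_i ( sup_{t∈[0,T]} ‖u_i(t)‖₂² + sup_{t∈[0,T]} ‖v_i(t)‖₂² + β_i ∫₀ᵀ ‖v_i(t)‖₂² dt ) ≤ C Σ_i ( ‖u_{i0}‖₂² + ‖v_{i0}‖₂² + sup_{t∈[0,T]} ‖u_i(t)‖_{H¹} · ∫₀ᵀ ( ‖∂_x φ_i(t)‖₂² + ‖v_i(t)‖₂² ) dt ). -/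
open Finset intervalIntegral MeasureTheory

noncomputable section

/-! ### Partial derivatives (functions of time and space are written `f t x`) -/

/-- Spatial partial derivative `∂_x f` at `(t, x)`. -/
def pdx (f : ℝ → ℝ → ℝ) (t x : ℝ) : ℝ := deriv (f t) x

/-- Time partial derivative `∂_t f` at `(t, x)`. -/
def pdt (f : ℝ → ℝ → ℝ) (t x : ℝ) : ℝ := deriv (fun s => f s x) t

/-- Second spatial derivative `∂_{xx} f` at `(t, x)`. -/
def pdxx (f : ℝ → ℝ → ℝ) (t x : ℝ) : ℝ := deriv (deriv (f t)) x

/-- Mixed derivative `∂_{xt} f = ∂_t ∂_x f` at `(t, x)`. -/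
def pdxt (f : ℝ → ℝ → ℝ) (t x : ℝ) : ℝ := deriv (fun s => deriv (f s) x) t

/-! ### Squared Sobolev norms on an interval `(0, ℓ)` -/

/-- Square of the `L²(0,ℓ)` norm. -/
def L2sq (ℓ : ℝ) (f : ℝ → ℝ) : ℝ := ∫ x in (0:ℝ)..ℓ, (f x) ^ 2

/-- Square of the `H¹(0,ℓ)` norm. -/
def H1sq (ℓ : ℝ) (f : ℝ → ℝ) : ℝ := L2sq ℓ f + L2sq ℓ (deriv f)

/-- Square of the `H²(0,ℓ)` norm. -/
def H2sq (ℓ : ℝ) (f : ℝ → ℝ) : ℝ := H1sq ℓ f + L2sq ℓ (deriv (deriv f))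

/-- `L²(0,ℓ)` norm. -/
def L2n (ℓ : ℝ) (f : ℝ → ℝ) : ℝ := Real.sqrt (L2sq ℓ f)

/-- `H¹(0,ℓ)` norm. -/
def H1n (ℓ : ℝ) (f : ℝ → ℝ) : ℝ := Real.sqrt (H1sq ℓ f)

/-- `H²(0,ℓ)` norm. -/
def H2n (ℓ : ℝ) (f : ℝ → ℝ) : ℝ := Real.sqrt (H2sq ℓ f)

/-- Supremum of `g` over the time interval `[0, T]`. -/
def supIcc (T : ℝ) (g : ℝ → ℝ) : ℝ := sSup (g '' Set.Icc 0 T)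

/-! ### Oriented networks -/

/-- An oriented network with nodes indexed by `P` and arcs indexed by `M`.
Arc `i` is parametrized by the compact interval `[0, len i]`; `first i`
(resp. `last i`) is the node sitting at the endpoint `x = 0` (resp. `x = len i`)
of the arc, `none` meaning that this endpoint is an outer boundary vertex.
An arc `i` is *incoming* at the node `ν` if `last i = some ν`, and *outgoing*
if `first i = some ν`. -/
structure Network (P M : Type) where
  len : M → ℝ
  len_pos : ∀ i, 0 < len i
  first : M → Option P
  last : M → Option P
  no_loop : ∀ i ν, ¬ (first i = some ν ∧ last i = some ν)

namespace Network

variable {P M : Type} [Fintype P] [Fintype M] [DecidableEq P] [DecidableEq M]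

/-- The set `M^ν` of arcs incident to the node `ν`. -/
def incident (G : Network P M) (ν : P) : Finset M :=
  Finset.univ.filter fun i => G.first i = some ν ∨ G.last i = some ν

/-- Trace at the node `ν` of a family `f` of functions on the arcs. -/
def trace (G : Network P M) (f : M → ℝ → ℝ) (ν : P) (j : M) : ℝ :=
  if G.last j = some ν then f j (G.len j) else f j 0

/-- Transmission conditions at the nodes for the hyperbolic unknowns `(u, v)`,
with transmission coefficients `K ν i j`. -/
def HypNode (G : Network P M) (lam : M → ℝ) (K : P → M → M → ℝ)
    (u v : M → ℝ → ℝ) : Prop :=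
  ∀ ν : P,
    (∀ i ∈ G.incident ν, G.last i = some ν →
      -(lam i * v i (G.len i)) =
        ∑ j ∈ G.incident ν, K ν i j * (G.trace u ν j - G.trace u ν i)) ∧
    (∀ i ∈ G.incident ν, G.first i = some ν →
      lam i * v i 0 =
        ∑ j ∈ G.incident ν, K ν i j * (G.trace u ν j - G.trace u ν i))

/-- Kedem–Katchalsky transmission conditions at the nodes for the parabolic
unknown `φ`, with transmission coefficients `α ν i j`. -/
def ParNode (G : Network P M) (D : M → ℝ) (α : P → M → M → ℝ)
    (φ : M → ℝ → ℝ) : Prop :=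
  ∀ ν : P,
    (∀ i ∈ G.incident ν, G.last i = some ν →
      D i * deriv (φ i) (G.len i) =
        ∑ j ∈ G.incident ν, α ν i j * (G.trace φ ν j - G.trace φ ν i)) ∧
    (∀ i ∈ G.incident ν, G.first i = some ν →
      -(D i * deriv (φ i) 0) =
        ∑ j ∈ G.incident ν, α ν i j * (G.trace φ ν j - G.trace φ ν i))

/-- Null condition for `v` at the outer boundary vertices of the network. -/
def OuterZero (G : Network P M) (v : M → ℝ → ℝ) : Prop :=
  ∀ i, (G.first i = none → v i 0 = 0) ∧ (G.last i = none → v i (G.len i) = 0)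

/-- `(u, v, φ)` is a (classical, smooth) solution of the hyperbolic–parabolic
chemotaxis system on the network `G` for times in the set `S`:
`∂_t u_i + λ_i ∂_x v_i = 0`, `∂_t v_i + λ_i ∂_x u_i = u_i ∂_x φ_i - β_i v_i`,
`∂_t φ_i = D_i ∂_{xx} φ_i + a u_i - b φ_i` on each arc, with null-flux boundary
conditions at the outer vertices and the transmission conditions at the nodes.
Functions are written `u i t x`. -/
structure IsSolution (G : Network P M) (lam beta D : M → ℝ) (a b : ℝ)
    (K α : P → M → M → ℝ) (S : Set ℝ) (u v φ : M → ℝ → ℝ → ℝ) : Prop where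
  reg_u : ∀ i, ContDiff ℝ 1 (Function.uncurry (u i))
  reg_v : ∀ i, ContDiff ℝ 1 (Function.uncurry (v i))
  reg_φ : ∀ i, ContDiff ℝ 2 (Function.uncurry (φ i))
  eq_u : ∀ i, ∀ t ∈ S, ∀ x ∈ Set.Icc 0 (G.len i),
    pdt (u i) t x + lam i * pdx (v i) t x = 0
  eq_v : ∀ i, ∀ t ∈ S, ∀ x ∈ Set.Icc 0 (G.len i),
    pdt (v i) t x + lam i * pdx (u i) t x = u i t x * pdx (φ i) t x - beta i * v i t x
  eq_φ : ∀ i, ∀ t ∈ S, ∀ x ∈ Set.Icc 0 (G.len i),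
    pdt (φ i) t x = D i * pdxx (φ i) t x + a * u i t x - b * φ i t x
  bc_v : ∀ t ∈ S, G.OuterZero fun i => v i t
  bc_φ : ∀ t ∈ S, G.OuterZero fun i => deriv (φ i t)
  node_uv : ∀ t ∈ S, G.HypNode lam K (fun i => u i t) fun i => v i t
  node_φ : ∀ t ∈ S, G.ParNode D α fun i => φ i t

end Network

end

/-!
Multiplying the equations for `u_i` and `v_i` by `u_i` and `v_i` and integrating by parts over
each arc gives
`d/dt ∑ (‖u_i‖² + ‖v_i‖²) = -2 ∑ λ_i [u_i v_i] - 2 ∑ β_i ‖v_i‖² + 2 ∑ ∫ u_i v_i ∂_x φ_i`.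
Regrouped node by node, the transmission conditions turn the boundary term into
`∑_ν ∑_{i,j} K^ν_{ij} u_i (u_i - u_j) = ½ ∑_ν ∑_{i,j} K^ν_{ij} (u_i - u_j)² ≥ 0`.
The chemotactic term is at most `‖u_i‖_∞ (‖∂_x φ_i‖² + ‖v_i‖²)`, and `‖u_i‖_∞ ≲ ‖u_i‖_{H¹}` by the
one-dimensional Sobolev embedding; integrating in time gives the estimate.
-/

open Function Set

section PartialDerivatives

variable {f : ℝ → ℝ → ℝ}

theorem hasDerivAt_pdt (hf : ContDiff ℝ 1 (uncurry f)) (t x : ℝ) :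
    HasDerivAt (fun s => f s x) (pdt f t x) t := by
  have hd : DifferentiableAt ℝ (fun s => uncurry f (s, x)) t :=
    (hf.differentiable one_ne_zero).differentiableAt.comp t (by fun_prop)
  exact hd.hasDerivAt

theorem hasDerivAt_pdx (hf : ContDiff ℝ 1 (uncurry f)) (t x : ℝ) :
    HasDerivAt (f t) (pdx f t x) x := by
  have hd : DifferentiableAt ℝ (fun y => uncurry f (t, y)) x :=
    (hf.differentiable one_ne_zero).differentiableAt.comp x (by fun_prop)
  exact hd.hasDerivAt

theorem pdt_eq_fderiv (hf : ContDiff ℝ 1 (uncurry f)) (t x : ℝ) :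
    pdt f t x = fderiv ℝ (uncurry f) (t, x) (1, 0) := by
  have h := (hf.differentiable one_ne_zero (t, x)).hasFDerivAt.comp_hasDerivAt t
    ((hasDerivAt_id t).prodMk (hasDerivAt_const t x))
  exact (hasDerivAt_pdt hf t x).unique h

theorem pdx_eq_fderiv (hf : ContDiff ℝ 1 (uncurry f)) (t x : ℝ) :
    pdx f t x = fderiv ℝ (uncurry f) (t, x) (0, 1) := by
  have h := (hf.differentiable one_ne_zero (t, x)).hasFDerivAt.comp_hasDerivAt x
    ((hasDerivAt_const x t).prodMk (hasDerivAt_id x))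
  exact (hasDerivAt_pdx hf t x).unique h

theorem continuous_pdt (hf : ContDiff ℝ 1 (uncurry f)) :
    Continuous fun p : ℝ × ℝ => pdt f p.1 p.2 := by
  simp_rw [pdt_eq_fderiv hf]
  exact (hf.continuous_fderiv one_ne_zero).clm_apply continuous_const

theorem continuous_pdx (hf : ContDiff ℝ 1 (uncurry f)) :
    Continuous fun p : ℝ × ℝ => pdx f p.1 p.2 := by
  simp_rw [pdx_eq_fderiv hf]
  exact (hf.continuous_fderiv one_ne_zero).clm_apply continuous_const

end PartialDerivatives

theorem L2sq_nonneg {ℓ : ℝ} (hℓ : 0 ≤ ℓ) (g : ℝ → ℝ) : 0 ≤ L2sq ℓ g :=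
  integral_nonneg hℓ fun _ _ => sq_nonneg _

theorem continuous_L2sq {g : ℝ → ℝ → ℝ} (hg : Continuous (uncurry g)) (ℓ : ℝ) :
    Continuous fun t => L2sq ℓ (g t) :=
  continuous_parametric_intervalIntegral_of_continuous' (hg.pow 2) 0 ℓ

theorem continuous_H1n {f : ℝ → ℝ → ℝ} (hf : ContDiff ℝ 1 (uncurry f)) (ℓ : ℝ) :
    Continuous fun t => H1n ℓ (f t) :=
  ((continuous_L2sq hf.continuous ℓ).add
    (continuous_L2sq (g := fun t x => pdx f t x) (continuous_pdx hf) ℓ)).sqrt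

theorem hasDerivAt_L2sq {f : ℝ → ℝ → ℝ} (hf : ContDiff ℝ 1 (uncurry f)) (ℓ t₀ : ℝ) :
    HasDerivAt (fun t => L2sq ℓ (f t)) (∫ x in (0:ℝ)..ℓ, 2 * f t₀ x * pdt f t₀ x) t₀ := by
  have hF' : Continuous fun p : ℝ × ℝ => 2 * f p.1 p.2 * pdt f p.1 p.2 :=
    (continuous_const.mul hf.continuous).mul (continuous_pdt hf)
  obtain ⟨C, hC⟩ := ((isCompact_closedBall t₀ 1).prod isCompact_uIcc).exists_bound_of_continuousOn
    hF'.continuousOn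
  refine (hasDerivAt_integral_of_dominated_loc_of_deriv_le (F := fun t x => f t x ^ 2)
    (F' := fun t x => 2 * f t x * pdt f t x) (a := 0) (b := ℓ) (μ := volume)
    (bound := fun _ => C) (Metric.ball_mem_nhds t₀ one_pos) ?_ ?_ ?_ ?_ intervalIntegrable_const
    ?_).2
  · exact .of_forall fun t => ((hf.continuous.comp (.prodMk_right t)).pow 2).aestronglyMeasurable
  · exact ((hf.continuous.comp (.prodMk_right t₀)).pow 2).intervalIntegrable 0 ℓ
  · exact (hF'.comp (.prodMk_right t₀)).aestronglyMeasurable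
  · refine .of_forall fun x hx t ht => hC (t, x) ⟨Metric.ball_subset_closedBall ht, ?_⟩
    exact Ioc_subset_Icc_self hx
  · refine .of_forall fun x _ t _ => ?_
    simpa [mul_comm, mul_left_comm] using (hasDerivAt_pdt hf t x).fun_pow 2

noncomputable def sobolevConst (ℓ : ℝ) : ℝ := √(1 / ℓ + 1)

theorem sobolevConst_nonneg (ℓ : ℝ) : 0 ≤ sobolevConst ℓ := Real.sqrt_nonneg _

section Sobolev

variable {g : ℝ → ℝ} {ℓ : ℝ}

theorem abs_integral_le_integral_abs_of_mem_Icc {h : ℝ → ℝ} (hh : Continuous h) {x y : ℝ}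
    (hx : x ∈ Icc 0 ℓ) (hy : y ∈ Icc 0 ℓ) :
    |∫ z in y..x, h z| ≤ ∫ z in (0:ℝ)..ℓ, |h z| := by
  have hℓ : 0 ≤ ℓ := hx.1.trans hx.2
  calc |∫ z in y..x, h z| ≤ |∫ z in y..x, (|h z|)| :=
      norm_integral_le_abs_integral_norm (f := h)
    _ ≤ |∫ z in (0:ℝ)..ℓ, (|h z|)| := by
        refine abs_integral_mono_interval ?_ (.of_forall fun z => abs_nonneg _)
          (hh.abs.intervalIntegrable _ _)
        rw [uIoc_of_le hℓ]
        exact Ioc_subset_Ioc (le_min hy.1 hx.1) (max_le hy.2 hx.2)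
    _ = ∫ z in (0:ℝ)..ℓ, |h z| := abs_of_nonneg (integral_nonneg hℓ fun _ _ => abs_nonneg _)

theorem sq_le_mul_H1sq (hg : ContDiff ℝ 1 g) (hℓ : 0 < ℓ) {x : ℝ} (hx : x ∈ Icc 0 ℓ) :
    g x ^ 2 ≤ (1 / ℓ + 1) * H1sq ℓ g := by
  have hgc : Continuous g := hg.continuous
  have hg'c : Continuous (deriv g) := hg.continuous_deriv le_rfl
  have hint (p q : ℝ) : IntervalIntegrable (fun z => g z ^ 2) volume p q :=
    (hgc.pow 2).intervalIntegrable p q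
  have hint' (p q : ℝ) : IntervalIntegrable (fun z => deriv g z ^ 2) volume p q :=
    (hg'c.pow 2).intervalIntegrable p q
  have hL2_le : L2sq ℓ g ≤ H1sq ℓ g := le_add_of_nonneg_right (L2sq_nonneg hℓ.le _)
  obtain ⟨y, hy, hmin⟩ := isCompact_Icc.exists_isMinOn (nonempty_Icc.2 hℓ.le)
    (hgc.pow 2).continuousOn
  have hy_le : ℓ * g y ^ 2 ≤ L2sq ℓ g := by
    simpa [L2sq] using
      integral_mono_on hℓ.le intervalIntegrable_const (hint 0 ℓ) fun z hz => hmin hz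
  have hftc : g x ^ 2 - g y ^ 2 = ∫ z in y..x, 2 * g z * deriv g z := by
    refine (integral_eq_sub_of_hasDerivAt (f := fun z => g z ^ 2) (fun z _ => ?_) ?_).symm
    · simpa [mul_comm, mul_left_comm] using (hg.differentiable one_ne_zero z).hasDerivAt.fun_pow 2
    · exact ((continuous_const.mul hgc).mul hg'c).intervalIntegrable _ _
  have hvar : |∫ z in y..x, 2 * g z * deriv g z| ≤ H1sq ℓ g := by
    refine (abs_integral_le_integral_abs_of_mem_Icc (by fun_prop) hx hy).trans ?_
    rw [H1sq, L2sq, L2sq, ← integral_add (hint 0 ℓ) (hint' 0 ℓ)]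
    have hcont : Continuous fun z => |2 * g z * deriv g z| := by fun_prop
    refine integral_mono_on hℓ.le (hcont.intervalIntegrable _ _)
      ((hint 0 ℓ).add (hint' 0 ℓ)) fun z _ => ?_
    simpa [abs_mul, mul_assoc, sq_abs] using two_mul_le_add_sq |g z| |deriv g z|
  have hy_sq : g y ^ 2 ≤ 1 / ℓ * H1sq ℓ g := by
    rw [one_div_mul_eq_div, le_div_iff₀' hℓ]; linarith
  linarith [le_abs_self (∫ z in y..x, 2 * g z * deriv g z)]

theorem abs_le_sobolevConst_mul_H1n (hg : ContDiff ℝ 1 g) (hℓ : 0 < ℓ) {x : ℝ}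
    (hx : x ∈ Icc 0 ℓ) : |g x| ≤ sobolevConst ℓ * H1n ℓ g := by
  rw [sobolevConst, H1n, ← Real.sqrt_mul (by positivity), ← Real.sqrt_sq_eq_abs]
  exact Real.sqrt_le_sqrt (sq_le_mul_H1sq hg hℓ hx)

end Sobolev

theorem abs_integral_two_mul_mul_mul_le {u v g : ℝ → ℝ} {ℓ A : ℝ} (hℓ : 0 ≤ ℓ)
    (hu : Continuous u) (hv : Continuous v) (hg : Continuous g)
    (hA : ∀ x ∈ Icc 0 ℓ, |u x| ≤ A) :
    |∫ x in (0:ℝ)..ℓ, 2 * u x * v x * g x| ≤ A * (L2sq ℓ g + L2sq ℓ v) := by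
  have hA0 : 0 ≤ A := (abs_nonneg _).trans (hA 0 ⟨le_rfl, hℓ⟩)
  have hint_g : IntervalIntegrable (fun x => g x ^ 2) volume 0 ℓ :=
    (hg.pow 2).intervalIntegrable _ _
  have hint_v : IntervalIntegrable (fun x => v x ^ 2) volume 0 ℓ :=
    (hv.pow 2).intervalIntegrable _ _
  have hcont : Continuous fun x => |2 * u x * v x * g x| := by fun_prop
  calc |∫ x in (0:ℝ)..ℓ, 2 * u x * v x * g x| ≤ ∫ x in (0:ℝ)..ℓ, |2 * u x * v x * g x| :=
        abs_integral_le_integral_abs hℓ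
    _ ≤ ∫ x in (0:ℝ)..ℓ, A * (g x ^ 2 + v x ^ 2) := by
        refine integral_mono_on hℓ (hcont.intervalIntegrable _ _)
          ((hint_g.add hint_v).const_mul A) fun x hx => ?_
        have hvg : 2 * |v x| * |g x| ≤ g x ^ 2 + v x ^ 2 := by
          simpa [sq_abs, add_comm] using two_mul_le_add_sq |v x| |g x|
        calc |2 * u x * v x * g x| = |u x| * (2 * |v x| * |g x|) := by
              simp only [abs_mul, abs_two]; ring
          _ ≤ A * (g x ^ 2 + v x ^ 2) :=
              mul_le_mul (hA x hx) hvg (by positivity) hA0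
    _ = A * (L2sq ℓ g + L2sq ℓ v) := by
        rw [intervalIntegral.integral_const_mul, integral_add hint_g hint_v, L2sq, L2sq]

theorem hasDerivAt_L2sq_add_L2sq {u v : ℝ → ℝ → ℝ} {g : ℝ → ℝ} {ℓ lam beta t : ℝ}
    (hu : ContDiff ℝ 1 (uncurry u)) (hv : ContDiff ℝ 1 (uncurry v)) (hg : Continuous g)
    (hℓ : 0 ≤ ℓ)
    (hequ : ∀ x ∈ Icc 0 ℓ, pdt u t x + lam * pdx v t x = 0)
    (heqv : ∀ x ∈ Icc 0 ℓ, pdt v t x + lam * pdx u t x = u t x * g x - beta * v t x) :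
    HasDerivAt (fun s => L2sq ℓ (u s) + L2sq ℓ (v s))
      (-2 * lam * (u t ℓ * v t ℓ - u t 0 * v t 0) - 2 * beta * L2sq ℓ (v t)
        + ∫ x in (0:ℝ)..ℓ, 2 * u t x * v t x * g x) t := by
  refine ((hasDerivAt_L2sq hu ℓ t).add (hasDerivAt_L2sq hv ℓ t)).congr_deriv ?_
  have hu_t : Continuous (u t) := hu.continuous.comp (.prodMk_right t)
  have hv_t : Continuous (v t) := hv.continuous.comp (.prodMk_right t)
  have hux : Continuous fun x => pdx u t x := (continuous_pdx hu).comp (.prodMk_right t)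
  have hvx : Continuous fun x => pdx v t x := (continuous_pdx hv).comp (.prodMk_right t)
  have hut : Continuous fun x => pdt u t x := (continuous_pdt hu).comp (.prodMk_right t)
  have hvt : Continuous fun x => pdt v t x := (continuous_pdt hv).comp (.prodMk_right t)
  have hI {h : ℝ → ℝ} (hh : Continuous h) : IntervalIntegrable h volume 0 ℓ :=
    hh.intervalIntegrable _ _
  have huut : Continuous fun x => 2 * u t x * pdt u t x := by fun_prop
  have hvvt : Continuous fun x => 2 * v t x * pdt v t x := by fun_prop
  have hflux_c : Continuous fun x => pdx u t x * v t x + u t x * pdx v t x := by fun_prop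
  have hchemo_c : Continuous fun x => 2 * u t x * v t x * g x := by fun_prop
  have hdamp_c : Continuous fun x => 2 * beta * v t x ^ 2 := by fun_prop
  have hflux : ∫ x in (0:ℝ)..ℓ, (pdx u t x * v t x + u t x * pdx v t x)
      = u t ℓ * v t ℓ - u t 0 * v t 0 :=
    integral_eq_sub_of_hasDerivAt (f := fun x => u t x * v t x)
      (fun x _ => (hasDerivAt_pdx hu t x).mul (hasDerivAt_pdx hv t x)) (hI hflux_c)
  have hpointwise : ∀ x ∈ uIcc 0 ℓ, 2 * u t x * pdt u t x + 2 * v t x * pdt v t x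
      = -2 * lam * (pdx u t x * v t x + u t x * pdx v t x)
        + (2 * u t x * v t x * g x - 2 * beta * v t x ^ 2) := by
    intro x hx
    rw [uIcc_of_le hℓ] at hx
    rw [eq_sub_of_add_eq (hequ x hx), eq_sub_of_add_eq (heqv x hx)]
    ring
  rw [← integral_add (hI huut) (hI hvvt), integral_congr hpointwise,
    integral_add (hI (hflux_c.const_mul _)) (hI (hchemo_c.fun_sub hdamp_c)),
    intervalIntegral.integral_const_mul, hflux, integral_sub (hI hchemo_c) (hI hdamp_c),
    intervalIntegral.integral_const_mul, L2sq]
  ring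

theorem Finset.sum_sum_mul_mul_sub_nonneg {ι : Type*} (s : Finset ι) (K : ι → ι → ℝ)
    (hsym : ∀ i j, K i j = K j i) (hnn : ∀ i j, 0 ≤ K i j) (x : ι → ℝ) :
    0 ≤ ∑ i ∈ s, ∑ j ∈ s, K i j * (x i * (x i - x j)) := by
  have hswap : ∑ i ∈ s, ∑ j ∈ s, K i j * (x i * (x i - x j))
      = ∑ i ∈ s, ∑ j ∈ s, K i j * (x j * (x j - x i)) := by
    rw [Finset.sum_comm]
    simp_rw [hsym]
  have hsq : 2 * ∑ i ∈ s, ∑ j ∈ s, K i j * (x i * (x i - x j))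
      = ∑ i ∈ s, ∑ j ∈ s, K i j * (x i - x j) ^ 2 := by
    rw [two_mul]
    nth_rewrite 2 [hswap]
    simp_rw [← Finset.sum_add_distrib]
    exact Finset.sum_congr rfl fun i _ => Finset.sum_congr rfl fun j _ => by ring
  have : 0 ≤ ∑ i ∈ s, ∑ j ∈ s, K i j * (x i - x j) ^ 2 :=
    Finset.sum_nonneg fun i _ => Finset.sum_nonneg fun j _ => mul_nonneg (hnn i j) (sq_nonneg _)
  linarith

theorem Finset.sum_sum_filter_eq_some {ι κ β : Type*} [Fintype ι] [Fintype κ] [DecidableEq κ]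
    [AddCommMonoid β] (e : ι → Option κ) (f : ι → β) (hf : ∀ i, e i = none → f i = 0) :
    ∑ k, ∑ i ∈ univ.filter (fun i => e i = some k), f i = ∑ i, f i := by
  rw [← Finset.sum_fiberwise univ e f, Fintype.sum_option,
    Finset.sum_eq_zero fun i hi => hf i (Finset.mem_filter.1 hi).2, zero_add]

namespace Network

variable {P M : Type} [Fintype M] [DecidableEq P] {G : Network P M}

/-- By the transmission conditions the flux leaving the arcs at `ν` is a symmetric graph
Laplacian of the traces of `U`. -/
theorem HypNode.sum_trace_mul_flux_nonneg {lam : M → ℝ} {K : P → M → M → ℝ} {U V : M → ℝ → ℝ}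
    (hnode : G.HypNode lam K U V) (hKsym : ∀ ν i j, K ν i j = K ν j i)
    (hKnn : ∀ ν i j, 0 ≤ K ν i j) (ν : P) :
    0 ≤ ∑ i ∈ G.incident ν, G.trace U ν i *
      (if G.last i = some ν then lam i * V i (G.len i) else -(lam i * V i 0)) := by
  have hflux : ∀ i ∈ G.incident ν,
      (if G.last i = some ν then lam i * V i (G.len i) else -(lam i * V i 0))
        = -∑ j ∈ G.incident ν, K ν i j * (G.trace U ν j - G.trace U ν i) := by
    intro i hi
    split_ifs with hl
    · rw [← (hnode ν).1 i hi hl, neg_neg]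
    · have hf : G.first i = some ν := ((Finset.mem_filter.1 hi).2).resolve_right hl
      rw [(hnode ν).2 i hi hf]
  rw [Finset.sum_congr rfl fun i hi => by rw [hflux i hi]]
  convert Finset.sum_sum_mul_mul_sub_nonneg (G.incident ν) (K ν) (hKsym ν) (hKnn ν)
    (G.trace U ν) using 2 with i
  rw [mul_neg, Finset.mul_sum, ← Finset.sum_neg_distrib]
  exact Finset.sum_congr rfl fun j _ => by ring

variable [DecidableEq M]

theorem incident_eq_filter_last_union_filter_first (ν : P) :
    G.incident ν =
      univ.filter (fun i => G.last i = some ν) ∪ univ.filter (fun i => G.first i = some ν) := by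
  rw [← Finset.filter_or, incident]
  exact Finset.filter_congr fun i _ => or_comm

variable [Fintype P]

theorem sum_sub_eq_sum_incident (F : M → ℝ → ℝ) (hF : G.OuterZero F) :
    ∑ i, (F i (G.len i) - F i 0) =
      ∑ ν, ∑ i ∈ G.incident ν, if G.last i = some ν then F i (G.len i) else -F i 0 := by
  have hdisj (ν : P) : Disjoint (univ.filter fun i => G.last i = some ν)
      (univ.filter fun i => G.first i = some ν) :=
    Finset.disjoint_filter.2 fun i _ hl hf => G.no_loop i ν ⟨hf, hl⟩
  have hnode (ν : P) : ∑ i ∈ G.incident ν, (if G.last i = some ν then F i (G.len i) else -F i 0)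
      = ∑ i ∈ univ.filter (fun i => G.last i = some ν), F i (G.len i)
        - ∑ i ∈ univ.filter (fun i => G.first i = some ν), F i 0 := by
    rw [G.incident_eq_filter_last_union_filter_first, Finset.sum_union (hdisj ν),
      Finset.sum_congr rfl fun i hi => if_pos (Finset.mem_filter.1 hi).2,
      Finset.sum_congr rfl fun i hi =>
        if_neg fun hl => G.no_loop i ν ⟨(Finset.mem_filter.1 hi).2, hl⟩,
      Finset.sum_neg_distrib, sub_eq_add_neg]
  simp_rw [hnode]
  rw [Finset.sum_sub_distrib, Finset.sum_sub_distrib,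
    Finset.sum_sum_filter_eq_some G.last _ fun i => (hF i).2,
    Finset.sum_sum_filter_eq_some G.first _ fun i => (hF i).1]

theorem HypNode.sum_boundary_nonneg {lam : M → ℝ} {K : P → M → M → ℝ} {U V : M → ℝ → ℝ}
    (hnode : G.HypNode lam K U V) (hout : G.OuterZero V) (hKsym : ∀ ν i j, K ν i j = K ν j i)
    (hKnn : ∀ ν i j, 0 ≤ K ν i j) :
    0 ≤ ∑ i, lam i * (U i (G.len i) * V i (G.len i) - U i 0 * V i 0) := by
  have hF : G.OuterZero fun i x => lam i * U i x * V i x := fun i =>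
    ⟨fun h => by simp [(hout i).1 h], fun h => by simp [(hout i).2 h]⟩
  calc (0:ℝ) ≤ ∑ ν, ∑ i ∈ G.incident ν, G.trace U ν i *
        (if G.last i = some ν then lam i * V i (G.len i) else -(lam i * V i 0)) :=
        Finset.sum_nonneg fun ν _ => hnode.sum_trace_mul_flux_nonneg hKsym hKnn ν
    _ = ∑ i, (lam i * U i (G.len i) * V i (G.len i) - lam i * U i 0 * V i 0) := by
        rw [G.sum_sub_eq_sum_incident _ hF]
        refine Finset.sum_congr rfl fun ν _ => Finset.sum_congr rfl fun i _ => ?_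
        unfold trace
        split_ifs <;> ring
    _ = ∑ i, lam i * (U i (G.len i) * V i (G.len i) - U i 0 * V i 0) :=
        Finset.sum_congr rfl fun i _ => by ring

end Network

section TimeInterval

variable {T : ℝ}

theorem add_integral_le_of_hasDerivAt_le {E E' r w : ℝ → ℝ} {t : ℝ} (ht : t ∈ Icc 0 T)
    (hE : ∀ s ∈ Icc 0 T, HasDerivAt E (E' s) s) (hr : Continuous r) (hw : Continuous w)
    (hr_nonneg : ∀ s ∈ Icc 0 T, 0 ≤ r s) (hE' : ∀ s ∈ Icc 0 T, E' s ≤ r s - w s) :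
    E t + ∫ s in (0:ℝ)..t, w s ≤ E 0 + ∫ s in (0:ℝ)..T, r s := by
  have hsub : Icc 0 t ⊆ Icc 0 T := Icc_subset_Icc_right ht.2
  have hEt : E t - E 0 ≤ ∫ s in (0:ℝ)..t, (r s - w s) :=
    sub_le_integral_of_hasDeriv_right_of_le ht.1
      (fun s hs => (hE s (hsub hs)).continuousAt.continuousWithinAt)
      (fun s hs => (hE s (hsub (Ioo_subset_Icc_self hs))).hasDerivWithinAt)
      (hr.sub hw).integrableOn_Icc (fun s hs => hE' s (hsub (Ioo_subset_Icc_self hs)))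
  have hrT : ∫ s in (0:ℝ)..t, r s ≤ ∫ s in (0:ℝ)..T, r s :=
    integral_mono_interval le_rfl ht.1 ht.2
      ((ae_restrict_iff' measurableSet_Ioc).2
        (.of_forall fun s hs => hr_nonneg s (Ioc_subset_Icc_self hs)))
      (hr.intervalIntegrable _ _)
  rw [integral_sub (hr.intervalIntegrable _ _) (hw.intervalIntegrable _ _)] at hEt
  linarith

theorem supIcc_le {g : ℝ → ℝ} {C : ℝ} (hT : 0 ≤ T) (hg : ∀ t ∈ Icc 0 T, g t ≤ C) :
    supIcc T g ≤ C :=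
  csSup_le ((Set.nonempty_Icc.2 hT).image g) (forall_mem_image.2 hg)

theorem le_supIcc {g : ℝ → ℝ} (hg : Continuous g) {t : ℝ} (ht : t ∈ Icc 0 T) :
    g t ≤ supIcc T g :=
  le_csSup (isCompact_Icc.image hg).bddAbove (mem_image_of_mem g ht)

theorem supIcc_nonneg {g : ℝ → ℝ} (hg : ∀ t, 0 ≤ g t) : 0 ≤ supIcc T g :=
  Real.sSup_nonneg (forall_mem_image.2 fun t _ => hg t)

end TimeInterval

theorem abs_le_sobolevConst_mul_supIcc_H1n {f : ℝ → ℝ → ℝ} (hf : ContDiff ℝ 1 (uncurry f))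
    {ℓ T t x : ℝ} (hℓ : 0 < ℓ) (ht : t ∈ Icc 0 T) (hx : x ∈ Icc 0 ℓ) :
    |f t x| ≤ sobolevConst ℓ * supIcc T (fun s => H1n ℓ (f s)) :=
  (abs_le_sobolevConst_mul_H1n (hf.comp (contDiff_const.prodMk contDiff_id)) hℓ hx).trans
    (mul_le_mul_of_nonneg_left (le_supIcc (continuous_H1n hf ℓ) ht) (sobolevConst_nonneg ℓ))

namespace Network.IsSolution

variable {P M : Type} [Fintype M] [DecidableEq P] {G : Network P M}
  {lam beta D : M → ℝ} {a b : ℝ} {K α : P → M → M → ℝ} {S : Set ℝ} {u v φ : M → ℝ → ℝ → ℝ}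

theorem continuous_deriv_φ (hsol : G.IsSolution lam beta D a b K α S u v φ) (i : M) :
    Continuous fun p : ℝ × ℝ => deriv (φ i p.1) p.2 :=
  continuous_pdx ((hsol.reg_φ i).of_le one_le_two)

theorem hasDerivAt_L2sq_add_L2sq (hsol : G.IsSolution lam beta D a b K α S u v φ) (i : M)
    {t : ℝ} (ht : t ∈ S) :
    HasDerivAt (fun s => L2sq (G.len i) (u i s) + L2sq (G.len i) (v i s))
      (-2 * lam i * (u i t (G.len i) * v i t (G.len i) - u i t 0 * v i t 0)
        - 2 * beta i * L2sq (G.len i) (v i t)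
        + ∫ x in (0:ℝ)..G.len i, 2 * u i t x * v i t x * deriv (φ i t) x) t :=
  _root_.hasDerivAt_L2sq_add_L2sq (hsol.reg_u i) (hsol.reg_v i)
    ((hsol.continuous_deriv_φ i).comp (.prodMk_right t)) (G.len_pos i).le
    (hsol.eq_u i t ht) (hsol.eq_v i t ht)

variable [Fintype P] [DecidableEq M] {T : ℝ}

theorem energy_deriv_le (hsol : G.IsSolution lam beta D a b K α (Icc 0 T) u v φ)
    (hKsym : ∀ ν i j, K ν i j = K ν j i) (hKnn : ∀ ν i j, 0 ≤ K ν i j) {s : ℝ}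
    (hs : s ∈ Icc 0 T) :
    ∑ i, (-2 * lam i * (u i s (G.len i) * v i s (G.len i) - u i s 0 * v i s 0)
        - 2 * beta i * L2sq (G.len i) (v i s)
        + ∫ x in (0:ℝ)..G.len i, 2 * u i s x * v i s x * deriv (φ i s) x) ≤
      ∑ i, sobolevConst (G.len i) * supIcc T (fun t => H1n (G.len i) (u i t))
          * (L2sq (G.len i) (deriv (φ i s)) + L2sq (G.len i) (v i s))
        - 2 * ∑ i, beta i * L2sq (G.len i) (v i s) := by
  set A : M → ℝ := fun i => sobolevConst (G.len i) * supIcc T (fun t => H1n (G.len i) (u i t))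
  set Ev : M → ℝ := fun i => L2sq (G.len i) (v i s)
  set R : M → ℝ := fun i => ∫ x in (0:ℝ)..G.len i, 2 * u i s x * v i s x * deriv (φ i s) x
  have hbdry := (hsol.node_uv s hs).sum_boundary_nonneg (hsol.bc_v s hs) hKsym hKnn
  have hchemo (i : M) : R i ≤ A i * (L2sq (G.len i) (deriv (φ i s)) + Ev i) :=
    (le_abs_self _).trans <| abs_integral_two_mul_mul_mul_le (G.len_pos i).le
      ((hsol.reg_u i).continuous.comp (.prodMk_right s))
      ((hsol.reg_v i).continuous.comp (.prodMk_right s))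
      ((hsol.continuous_deriv_φ i).comp (.prodMk_right s))
      fun x hx => abs_le_sobolevConst_mul_supIcc_H1n (hsol.reg_u i) (G.len_pos i) hs hx
  have hsplit : ∑ i, (-2 * lam i * (u i s (G.len i) * v i s (G.len i) - u i s 0 * v i s 0)
      - 2 * beta i * Ev i + R i)
      = -2 * ∑ i, lam i * (u i s (G.len i) * v i s (G.len i) - u i s 0 * v i s 0)
        + ∑ i, (R i - 2 * beta i * Ev i) := by
    rw [Finset.mul_sum, ← Finset.sum_add_distrib]
    exact Finset.sum_congr rfl fun i _ => by ring
  have hcollect : ∑ i, A i * (L2sq (G.len i) (deriv (φ i s)) + Ev i) - 2 * ∑ i, beta i * Ev i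
      = ∑ i, (A i * (L2sq (G.len i) (deriv (φ i s)) + Ev i) - 2 * beta i * Ev i) := by
    rw [Finset.mul_sum, ← Finset.sum_sub_distrib]
    exact Finset.sum_congr rfl fun i _ => by ring
  rw [hsplit, hcollect]
  have := Finset.sum_le_sum (s := Finset.univ) fun i _ =>
    sub_le_sub_right (hchemo i) (2 * beta i * Ev i)
  linarith

theorem energy_le (hsol : G.IsSolution lam beta D a b K α (Icc 0 T) u v φ)
    (hKsym : ∀ ν i j, K ν i j = K ν j i) (hKnn : ∀ ν i j, 0 ≤ K ν i j) {t : ℝ}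
    (ht : t ∈ Icc 0 T) :
    ∑ i, (L2sq (G.len i) (u i t) + L2sq (G.len i) (v i t))
        + 2 * ∑ i, beta i * ∫ s in (0:ℝ)..t, L2sq (G.len i) (v i s) ≤
      ∑ i, (L2sq (G.len i) (u i 0) + L2sq (G.len i) (v i 0)
        + sobolevConst (G.len i) * (supIcc T (fun s => H1n (G.len i) (u i s))
          * ∫ s in (0:ℝ)..T, (L2sq (G.len i) (deriv (φ i s)) + L2sq (G.len i) (v i s)))) := by
  set A : M → ℝ := fun i => sobolevConst (G.len i) * supIcc T (fun s => H1n (G.len i) (u i s))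
  set Eφ : M → ℝ → ℝ := fun i s => L2sq (G.len i) (deriv (φ i s))
  set Ev : M → ℝ → ℝ := fun i s => L2sq (G.len i) (v i s)
  have hEφ (i : M) : Continuous (Eφ i) :=
    continuous_L2sq (g := fun s x => deriv (φ i s) x) (hsol.continuous_deriv_φ i) _
  have hEv (i : M) : Continuous (Ev i) := continuous_L2sq (hsol.reg_v i).continuous _
  have hA (i : M) : 0 ≤ A i :=
    mul_nonneg (sobolevConst_nonneg _) (supIcc_nonneg fun _ => Real.sqrt_nonneg _)
  have key := add_integral_le_of_hasDerivAt_le ht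
    (E := fun s => ∑ i, (L2sq (G.len i) (u i s) + L2sq (G.len i) (v i s)))
    (r := fun s => ∑ i, A i * (Eφ i s + Ev i s)) (w := fun s => 2 * ∑ i, beta i * Ev i s)
    (fun s hs => HasDerivAt.fun_sum fun i _ => hsol.hasDerivAt_L2sq_add_L2sq i hs)
    (continuous_finsetSum _ fun i _ => continuous_const.mul ((hEφ i).add (hEv i)))
    (continuous_const.mul (continuous_finsetSum _ fun i _ => continuous_const.mul (hEv i)))
    (fun s _ => Finset.sum_nonneg fun i _ => mul_nonneg (hA i)
      (add_nonneg (L2sq_nonneg (G.len_pos i).le _) (L2sq_nonneg (G.len_pos i).le _)))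
    fun s hs => hsol.energy_deriv_le hKsym hKnn hs
  have hw : ∫ s in (0:ℝ)..t, 2 * ∑ i, beta i * Ev i s
      = 2 * ∑ i, beta i * ∫ s in (0:ℝ)..t, Ev i s := by
    rw [intervalIntegral.integral_const_mul, intervalIntegral.integral_finsetSum
      fun i _ => (continuous_const.fun_mul (hEv i)).intervalIntegrable _ _]
    simp_rw [intervalIntegral.integral_const_mul]
  have hr : ∫ s in (0:ℝ)..T, ∑ i, A i * (Eφ i s + Ev i s)
      = ∑ i, A i * ∫ s in (0:ℝ)..T, (Eφ i s + Ev i s) := by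
    rw [intervalIntegral.integral_finsetSum
      fun i _ => (continuous_const.fun_mul ((hEφ i).fun_add (hEv i))).intervalIntegrable _ _]
    simp_rw [intervalIntegral.integral_const_mul]
  rw [hw, hr] at key
  refine key.trans_eq ?_
  rw [← Finset.sum_add_distrib]
  exact Finset.sum_congr rfl fun i _ => by ring

end Network.IsSolution

theorem sum_supIcc_add_supIcc_add_mul_integral_le {ι : Type*} [Fintype ι] {x y : ι → ℝ → ℝ}
    {β : ι → ℝ} {T R : ℝ} (hT : 0 ≤ T) (hx : ∀ i t, 0 ≤ x i t) (hy : ∀ i t, 0 ≤ y i t)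
    (hβ : ∀ i, 0 ≤ β i)
    (h : ∀ t ∈ Icc 0 T, ∑ i, (x i t + y i t) + 2 * ∑ i, β i * ∫ s in (0:ℝ)..t, y i s ≤ R) :
    ∑ i, (supIcc T (x i) + supIcc T (y i) + β i * ∫ s in (0:ℝ)..T, y i s)
      ≤ 3 * Fintype.card ι * R := by
  have hdissip (t : ℝ) (ht : 0 ≤ t) (i : ι) : 0 ≤ β i * ∫ s in (0:ℝ)..t, y i s :=
    mul_nonneg (hβ i) (integral_nonneg ht fun s _ => hy i s)
  have henergy (t : ℝ) (ht : t ∈ Icc 0 T) (i : ι) : x i t + y i t ≤ R := by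
    have := Finset.single_le_sum (f := fun i => x i t + y i t)
      (fun j _ => add_nonneg (hx j t) (hy j t)) (Finset.mem_univ i)
    have := Finset.sum_nonneg fun j (_ : j ∈ Finset.univ) => hdissip t ht.1 j
    linarith [h t ht]
  have hterm (i : ι) : supIcc T (x i) + supIcc T (y i) + β i * ∫ s in (0:ℝ)..T, y i s ≤ 3 * R := by
    have hxR := supIcc_le hT fun t ht => (le_add_of_nonneg_right (hy i t)).trans (henergy t ht i)
    have hyR := supIcc_le hT fun t ht => (le_add_of_nonneg_left (hx i t)).trans (henergy t ht i)
    have := Finset.single_le_sum (f := fun i => β i * ∫ s in (0:ℝ)..T, y i s)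
      (fun j _ => hdissip T hT j) (Finset.mem_univ i)
    have := Finset.sum_nonneg fun j (_ : j ∈ Finset.univ) => add_nonneg (hx j T) (hy j T)
    have := Finset.sum_nonneg fun j (_ : j ∈ Finset.univ) => hdissip T hT j
    linarith [h T ⟨hT, le_rfl⟩]
  calc _ ≤ ∑ _i : ι, 3 * R := Finset.sum_le_sum fun i _ => hterm i
    _ = 3 * Fintype.card ι * R := by rw [Finset.sum_const, Finset.card_univ, nsmul_eq_mul]; ring

theorem sum_add_mul_le_mul_sum {ι : Type*} [Fintype ι] {x c p : ι → ℝ} (hx : ∀ i, 0 ≤ x i)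
    (hc : ∀ i, 0 ≤ c i) (hp : ∀ i, 0 ≤ p i) :
    ∑ i, (x i + c i * p i) ≤ (1 + ∑ i, c i) * ∑ i, (x i + p i) := by
  rw [Finset.mul_sum]
  refine Finset.sum_le_sum fun i _ => ?_
  have hci : c i ≤ ∑ j, c j := Finset.single_le_sum (fun j _ => hc j) (Finset.mem_univ i)
  have hcx : 0 ≤ (∑ j, c j) * x i :=
    mul_nonneg (Finset.sum_nonneg fun j _ => hc j) (hx i)
  nlinarith [mul_le_mul_of_nonneg_right hci (hp i), hp i]

theorem apriori_L2_estimate_general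
    {P M : Type} [Fintype P] [Fintype M] [DecidableEq P] [DecidableEq M]
    (G : Network P M) (lam beta D : M → ℝ) (a b : ℝ) (K α : P → M → M → ℝ)
    (hbeta : ∀ i, 0 < beta i)
    (hKsym : ∀ ν i j, K ν i j = K ν j i) (hKnn : ∀ ν i j, 0 ≤ K ν i j)
    :
    ∃ C > 0, ∀ T > 0, ∀ u v φ : M → ℝ → ℝ → ℝ,
      G.IsSolution lam beta D a b K α (Set.Icc 0 T) u v φ →
      ∑ i, (supIcc T (fun t => L2sq (G.len i) (u i t))
          + supIcc T (fun t => L2sq (G.len i) (v i t))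
          + beta i * ∫ t in (0:ℝ)..T, L2sq (G.len i) (v i t)) ≤
      C * ∑ i, (L2sq (G.len i) (u i 0) + L2sq (G.len i) (v i 0)
          + supIcc T (fun t => H1n (G.len i) (u i t))
            * ∫ t in (0:ℝ)..T,
                (L2sq (G.len i) (deriv (φ i t)) + L2sq (G.len i) (v i t))) := by
  have hc (i : M) : 0 ≤ sobolevConst (G.len i) := sobolevConst_nonneg _
  have hL2 (i : M) (f : ℝ → ℝ) : 0 ≤ L2sq (G.len i) f := L2sq_nonneg (G.len_pos i).le f
  refine ⟨3 * (Fintype.card M + 1) * (1 + ∑ i, sobolevConst (G.len i)),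
    mul_pos (by positivity) (add_pos_of_pos_of_nonneg one_pos (Finset.sum_nonneg fun i _ => hc i)),
    fun T hT u v φ hsol => ?_⟩
  have hmixed (i : M) : 0 ≤ supIcc T (fun t => H1n (G.len i) (u i t))
      * ∫ t in (0:ℝ)..T, (L2sq (G.len i) (deriv (φ i t)) + L2sq (G.len i) (v i t)) :=
    mul_nonneg (supIcc_nonneg fun _ => Real.sqrt_nonneg _)
      (integral_nonneg hT.le fun _ _ => add_nonneg (hL2 i _) (hL2 i _))
  have hR := Finset.sum_nonneg fun i (_ : i ∈ Finset.univ) =>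
    add_nonneg (add_nonneg (hL2 i (u i 0)) (hL2 i (v i 0))) (mul_nonneg (hc i) (hmixed i))
  have hsup := sum_supIcc_add_supIcc_add_mul_integral_le hT.le
    (fun i t => hL2 i (u i t)) (fun i t => hL2 i (v i t)) (fun i => (hbeta i).le)
    fun t ht => hsol.energy_le hKsym hKnn ht
  have hconst := sum_add_mul_le_mul_sum (fun i => add_nonneg (hL2 i (u i 0)) (hL2 i (v i 0)))
    hc hmixed
  calc _ ≤ _ := hsup
    _ ≤ 3 * (Fintype.card M + 1) * _ := mul_le_mul (by linarith) hconst hR (by positivity)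
    _ = _ := by ring

/-- **A priori `L²` estimate for `(u, v)` (Proposition 5.1).**
For any local (classical) solution of the chemotaxis system on the network `G`
on a time interval `[0, T]`, one has
`∑_i ( sup_{[0,T]} ‖u_i(t)‖₂² + sup_{[0,T]} ‖v_i(t)‖₂² + β_i ∫₀ᵀ ‖v_i(t)‖₂² dt )
  ≤ C ∑_i ( ‖u_{i0}‖₂² + ‖v_{i0}‖₂²
      + sup_{[0,T]} ‖u_i(t)‖_{H¹} ∫₀ᵀ (‖∂_x φ_i(t)‖₂² + ‖v_i(t)‖₂²) dt )`,
where `C > 0` depends only on the parameters of the problem. -/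
theorem apriori_L2_estimate
    {P M : Type} [Fintype P] [Fintype M] [DecidableEq P] [DecidableEq M]
    (G : Network P M) (lam beta D : M → ℝ) (a b : ℝ) (K α : P → M → M → ℝ)
    (hlam : ∀ i, 0 ≤ lam i) (hbeta : ∀ i, 0 < beta i) (hD : ∀ i, 0 < D i)
    (ha : 0 ≤ a) (hb : 0 < b)
    (hKsym : ∀ ν i j, K ν i j = K ν j i) (hKnn : ∀ ν i j, 0 ≤ K ν i j)
    (hαsym : ∀ ν i j, α ν i j = α ν j i) (hαnn : ∀ ν i j, 0 ≤ α ν i j)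
    :
    ∃ C > 0, ∀ T > 0, ∀ u v φ : M → ℝ → ℝ → ℝ,
      G.IsSolution lam beta D a b K α (Set.Icc 0 T) u v φ →
      ∑ i, (supIcc T (fun t => L2sq (G.len i) (u i t))
          + supIcc T (fun t => L2sq (G.len i) (v i t))
          + beta i * ∫ t in (0:ℝ)..T, L2sq (G.len i) (v i t)) ≤
      C * ∑ i, (L2sq (G.len i) (u i 0) + L2sq (G.len i) (v i 0)
          + supIcc T (fun t => H1n (G.len i) (u i t))
            * ∫ t in (0:ℝ)..T,
                (L2sq (G.len i) (deriv (φ i t)) + L2sq (G.len i) (v i t))) :=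
  apriori_L2_estimate_general G lam beta D a b K α hbeta hKsym hKnn
end
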